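/- arXiv:2601.15470 — 4 statements merged into one kernel-verified Lean document; each statement's English description precedes it below -/
import Mathlib

section
/- There exists an absolute constant C > 0 with the following property. Let (X,d) be a finite metric space all of whose nonzero distances are at least 1, let k ≥ 1 be an integer, let c ≥ 1, and let ε > 0. If (X,d) admits a probabilistic (k,c)-outlier embedding into 2-HSTs, then there exists a subset S ⊆ X with |X ∖ S| ≤ C·(k/ε)·(1 + log k)² such that (S,d) admits a probabilistic embedding into 2-HSTs with distortion at most (32 + ε)·c. -/
set_option linter.unusedSectionVars false
set_option linter.unusedVariables false
set_option maxHeartbeats 1000000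


/-- `ρ` is a 2-HST metric on the subset `S`: a metric (symmetric, nonnegative, zero
exactly on the diagonal, triangle inequality) satisfying the strong triangle inequality,
all of whose nonzero values are integer powers of 2 (with nonnegative exponent). -/
def IsHSTMetricOn {X : Type*} (S : Set X) (ρ : X → X → ℝ) : Prop :=
  (∀ x ∈ S, ρ x x = 0) ∧
  (∀ x ∈ S, ∀ y ∈ S, ρ x y = ρ y x) ∧
  (∀ x ∈ S, ∀ y ∈ S, 0 ≤ ρ x y) ∧
  (∀ x ∈ S, ∀ y ∈ S, x ≠ y → ρ x y ≠ 0) ∧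
  (∀ x ∈ S, ∀ y ∈ S, ∀ z ∈ S, ρ x z ≤ ρ x y + ρ y z) ∧
  (∀ x ∈ S, ∀ y ∈ S, ∀ z ∈ S, ρ x z ≤ max (ρ x y) (ρ y z)) ∧
  (∀ x ∈ S, ∀ y ∈ S, ρ x y ≠ 0 → ∃ i : ℕ, ρ x y = 2 ^ i)

/-- `(S,d)` admits a finitely supported probabilistic embedding into 2-HSTs with
distortion `c`: every embedding in the support is an expanding 2-HST metric on `S`,
and expected distances are at most `c` times the original. -/
def ProbHSTEmbedding {X : Type*} (S : Set X) (d : X → X → ℝ) (c : ℝ) : Prop :=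
  ∃ (n : ℕ) (p : Fin n → ℝ) (ρ : Fin n → X → X → ℝ),
    (∀ i, 0 ≤ p i) ∧ (∑ i, p i = 1) ∧
    (∀ i, IsHSTMetricOn S (ρ i)) ∧
    (∀ i, ∀ u ∈ S, ∀ v ∈ S, d u v ≤ ρ i u v) ∧
    (∀ u ∈ S, ∀ v ∈ S, ∑ i, p i * ρ i u v ≤ c * d u v)

/-- `d` is a metric on `X` all of whose nonzero distances are at least 1. -/
def IsMetricGE1 {X : Type*} (d : X → X → ℝ) : Prop :=
  (∀ x, d x x = 0) ∧
  (∀ x y, d x y = d y x) ∧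
  (∀ x y z, d x z ≤ d x y + d y z) ∧
  (∀ x y, x ≠ y → 1 ≤ d x y)

open Classical in
noncomputable section

set_option linter.unusedSectionVars false
set_option maxHeartbeats 1000000
set_option linter.unusedVariables false


namespace OutlierHST

variable {X : Type} [DecidableEq X]

/-! ### Basic helpers -/

/-- sup of `f` over pairs of a finset, `0` if empty. -/
noncomputable def fdiam (f : X → X → ℝ) (Y : Finset X) : ℝ :=
  if h : Y.Nonempty then Y.sup' h (fun u => Y.sup' h (fun v => f u v)) else 0

lemma le_fdiam {f : X → X → ℝ} {Y : Finset X} {u v : X} (hu : u ∈ Y) (hv : v ∈ Y) :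
    f u v ≤ fdiam f Y := by
  have h : Y.Nonempty := ⟨u, hu⟩
  rw [fdiam, dif_pos h]
  exact le_trans (Finset.le_sup' (fun v => f u v) hv)
    (Finset.le_sup' (fun u => Y.sup' h (fun v => f u v)) hu)

lemma fdiam_nonneg {f : X → X → ℝ} {Y : Finset X} (hf : ∀ u ∈ Y, ∀ v ∈ Y, 0 ≤ f u v) :
    0 ≤ fdiam f Y := by
  rcases Y.eq_empty_or_nonempty with h | h
  · simp [fdiam, h]
  · obtain ⟨u, hu⟩ := h
    exact le_trans (hf u hu u hu) (le_fdiam hu hu)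

lemma fdiam_le {f : X → X → ℝ} {Y : Finset X} {M : ℝ} (hM : 0 ≤ M)
    (h : ∀ u ∈ Y, ∀ v ∈ Y, f u v ≤ M) : fdiam f Y ≤ M := by
  rcases Y.eq_empty_or_nonempty with hY | hY
  · simp [fdiam, hY, hM]
  · rw [fdiam, dif_pos hY]
    exact Finset.sup'_le _ _ (fun u hu => Finset.sup'_le _ _ (fun v hv => h u hu v hv))

lemma fdiam_mono {f : X → X → ℝ} {Y Z : Finset X} (hf : ∀ u ∈ Y, ∀ v ∈ Y, 0 ≤ f u v)
    (hZY : Z ⊆ Y) : fdiam f Z ≤ fdiam f Y :=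
  fdiam_le (fdiam_nonneg hf) (fun u hu v hv => le_fdiam (hZY hu) (hZY hv))

lemma exists_fdiam_eq {f : X → X → ℝ} {Y : Finset X} (hY : Y.Nonempty) :
    ∃ u ∈ Y, ∃ v ∈ Y, fdiam f Y = f u v := by
  rw [fdiam, dif_pos hY]
  obtain ⟨u, hu, hu'⟩ := Finset.exists_mem_eq_sup' hY (fun u => Y.sup' hY (fun v => f u v))
  obtain ⟨v, hv, hv'⟩ := Finset.exists_mem_eq_sup' hY (fun v => f u v)
  exact ⟨u, hu, v, hv, by rw [hu', hv']⟩

/-- round up to a power of two -/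
noncomputable def pow2c (x : ℝ) : ℝ := 2 ^ (Nat.clog 2 ⌈x⌉₊)

lemma pow2c_pos (x : ℝ) : 0 < pow2c x := by rw [pow2c]; positivity

lemma pow2c_isPow (x : ℝ) : ∃ i : ℕ, pow2c x = 2 ^ i := ⟨_, rfl⟩

lemma le_pow2c (x : ℝ) : x ≤ pow2c x := by
  calc x ≤ (⌈x⌉₊ : ℝ) := Nat.le_ceil x
  _ ≤ ((2 ^ (Nat.clog 2 ⌈x⌉₊) : ℕ) : ℝ) := by
        rcases Nat.eq_zero_or_pos ⌈x⌉₊ with h | h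
        · simp [h]
        · exact_mod_cast Nat.le_pow_clog one_lt_two _
  _ = pow2c x := by push_cast [pow2c]; ring

lemma pow2c_le {x : ℝ} (hx : 1 ≤ x) : pow2c x ≤ 4 * x := by
  have hceil : (⌈x⌉₊ : ℝ) ≤ x + 1 := le_of_lt (Nat.ceil_lt_add_one (by linarith))
  have h1 : 1 ≤ ⌈x⌉₊ := Nat.one_le_ceil_iff.2 (by linarith)
  have key : (2:ℕ) ^ (Nat.clog 2 ⌈x⌉₊) ≤ 2 * ⌈x⌉₊ := by
    rcases eq_or_lt_of_le h1 with h | h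
    · simp [← h]
    · have h2 : 1 ≤ Nat.clog 2 ⌈x⌉₊ := Nat.clog_pos one_lt_two h
      have := Nat.pow_pred_clog_lt_self one_lt_two h
      calc (2:ℕ) ^ (Nat.clog 2 ⌈x⌉₊) = 2 * 2 ^ (Nat.clog 2 ⌈x⌉₊ - 1) := by
            rw [← pow_succ']
            congr 1
            omega
      _ ≤ 2 * ⌈x⌉₊ := Nat.mul_le_mul_left 2 this.le
  have : pow2c x ≤ 2 * (⌈x⌉₊ : ℝ) := by
    rw [pow2c]
    exact_mod_cast key
  calc pow2c x ≤ 2 * (⌈x⌉₊:ℝ) := this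
  _ ≤ 2 * (x+1) := by linarith
  _ ≤ 4 * x := by linarith

lemma pow2c_mono {x y : ℝ} (h : x ≤ y) : pow2c x ≤ pow2c y := by
  rw [pow2c, pow2c]
  have : Nat.clog 2 ⌈x⌉₊ ≤ Nat.clog 2 ⌈y⌉₊ := Nat.clog_mono_right 2 (Nat.ceil_le_ceil h)
  exact pow_le_pow_right₀ one_le_two this


/-! ### metric basics -/

lemma IsMetricGE1.nonneg {d : X → X → ℝ} (hd : IsMetricGE1 d) (x y : X) : 0 ≤ d x y := by
  obtain ⟨h0, hs, ht, _⟩ := hd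
  have := ht x y x
  rw [h0, hs y x] at this
  linarith

/-! ### growth lemma -/

lemma growth_lemma (g : ℕ → ℕ) (τ L : ℕ) (hτ : 1 ≤ τ) (h0 : 1 ≤ g 0)
    (hN : g (τ * L) < 2 ^ L) : ∃ j < τ * L, τ * g (j + 1) ≤ (τ + 1) * g j := by
  by_contra hcon
  push_neg at hcon
  -- first: along any stretch, reals grow geometrically
  have hstep : ∀ j < τ * L, ((τ:ℝ) + 1) * g j < τ * g (j+1) := by
    intro j hj
    exact_mod_cast Nat.lt_of_succ_le (hcon j hj)
  have hmono : ∀ j ≤ τ * L, (1:ℝ) ≤ g j := by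
    intro j hj
    induction j with
    | zero => exact_mod_cast h0
    | succ i ih =>
      have hi : i < τ * L := lt_of_lt_of_le (Nat.lt_succ_self i) hj
      have h1 := hstep i hi
      have h2 : (1:ℝ) ≤ g i := ih (le_of_lt hi)
      have hτR : (0:ℝ) < τ := by exact_mod_cast hτ
      nlinarith
  have key : ∀ i ≤ L, (2:ℝ) ^ i ≤ g (τ * i) := by
    intro i hi
    induction i with
    | zero => simpa using hmono 0 (Nat.zero_le _)
    | succ i ih =>
      have hi' : i ≤ L := Nat.le_of_succ_le hi
      have ihh := ih hi'
      -- within τ steps the value at least doubles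
      have hgrow : ∀ s ≤ τ, (1 + 1/(τ:ℝ)) ^ s * g (τ * i) ≤ g (τ * i + s) := by
        intro s hs
        induction s with
        | zero => simp
        | succ s ihs =>
          have ihs' := ihs (Nat.le_of_succ_le hs)
          have hj : τ * i + s < τ * L := by
            have : τ * i + τ ≤ τ * L := by
              rw [← Nat.mul_succ]
              exact Nat.mul_le_mul_left τ hi
            omega
          have h1 := hstep _ hj
          have hτR : (0:ℝ) < τ := by exact_mod_cast hτ
          have e1 : ((τ:ℝ) + 1) / τ * g (τ * i + s) < g (τ * i + s + 1) := by
            rw [div_mul_eq_mul_div, div_lt_iff₀ hτR]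
            nlinarith
          have e2 : (1 + 1/(τ:ℝ)) ^ (s+1) * g (τ * i) =
              ((τ:ℝ)+1)/τ * ((1 + 1/(τ:ℝ)) ^ s * g (τ * i)) := by
            rw [pow_succ, add_div, div_self hτR.ne']
            ring
          rw [e2]
          have hpos : (0:ℝ) ≤ ((τ:ℝ)+1)/τ := by positivity
          calc ((τ:ℝ)+1)/τ * ((1 + 1/(τ:ℝ)) ^ s * g (τ * i))
              ≤ ((τ:ℝ)+1)/τ * g (τ * i + s) := by
                exact mul_le_mul_of_nonneg_left ihs' hpos
            _ ≤ g (τ * i + s + 1) := le_of_lt e1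
      have h2 : (2:ℝ) ≤ (1 + 1/(τ:ℝ)) ^ τ := by
        have hτR : (0:ℝ) < τ := by exact_mod_cast hτ
        have hnn : (0:ℝ) ≤ 1/(τ:ℝ) := by positivity
        have := one_add_mul_le_pow (a := 1/(τ:ℝ)) (by linarith : (-2:ℝ) ≤ 1/(τ:ℝ)) τ
        have e : (τ:ℝ) * (1/τ) = 1 := by field_simp
        rw [e] at this
        linarith
      have := hgrow τ le_rfl
      have hτi : τ * (i+1) = τ * i + τ := by ring
      rw [hτi]
      have hg0 : (0:ℝ) ≤ g (τ * i) := by positivity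
      calc (2:ℝ)^(i+1) = 2 * 2^i := by ring
        _ ≤ 2 * g (τ * i) := by nlinarith [ihh]
        _ ≤ (1 + 1/(τ:ℝ))^τ * g (τ * i) := by nlinarith
        _ ≤ g (τ * i + τ) := this
  have := key L le_rfl
  have hNR : (g (τ * L) : ℝ) < 2 ^ L := by exact_mod_cast hN
  linarith


/-! ### the cut lemma -/

attribute [local instance] Classical.propDecidable

lemma cut_lemma (d : X → X → ℝ) (hd : IsMetricGE1 d) (Y : Finset X) (h2 : 2 ≤ Y.card)
    (τ L : ℕ) (hτ : 1 ≤ τ) (hY : Y.card < 2 ^ L) :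
    ∃ (I S O : Finset X) (w : ℝ),
      I ∪ S ∪ O = Y ∧ Disjoint I S ∧ Disjoint I O ∧ Disjoint S O ∧
      I.Nonempty ∧ O.Nonempty ∧
      τ * S.card ≤ I.card ∧ τ * S.card ≤ O.card ∧
      0 < w ∧ (∀ u ∈ I, ∀ v ∈ O, w ≤ d u v) ∧
      fdiam d Y ≤ ((8 * τ * L : ℕ) : ℝ) * w := by
  obtain ⟨hd0, hds, hdt, hd1⟩ := hd
  have hdn : ∀ x y : X, 0 ≤ d x y := IsMetricGE1.nonneg ⟨hd0, hds, hdt, hd1⟩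
  have hne : Y.Nonempty := Finset.card_pos.mp (by omega)
  obtain ⟨x, hx, y₀, hy₀, hxy⟩ := exists_fdiam_eq (f := d) hne
  obtain ⟨Δ, hΔdef⟩ : ∃ Δ : ℝ, Δ = fdiam d Y := ⟨_, rfl⟩
  rw [← hΔdef] at hxy
  have hδle : ∀ u ∈ Y, ∀ v ∈ Y, d u v ≤ Δ := by
    intro u hu v hv
    rw [hΔdef]
    exact le_fdiam hu hv
  have hΔ1 : 1 ≤ Δ := by
    obtain ⟨a, ha, b, hb, hab⟩ := Finset.one_lt_card.mp h2
    exact le_trans (hd1 a b hab) (hδle a ha b hb)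
  have hL1 : 1 ≤ L := by
    by_contra h
    interval_cases L <;> omega
  have hτL1 : 1 ≤ τ * L := Nat.one_le_iff_ne_zero.2 (by positivity)
  obtain ⟨w, hwdef⟩ : ∃ w : ℝ, w = Δ / (8 * τ * L) := ⟨_, rfl⟩
  have hwpos : 0 < w := by
    rw [hwdef]
    apply div_pos (by linarith)
    have h1 : (1:ℝ) ≤ (τ:ℝ) := by exact_mod_cast hτ
    have h2 : (1:ℝ) ≤ (L:ℝ) := by exact_mod_cast hL1
    nlinarith
  have hjw : ∀ j : ℕ, 0 ≤ (j:ℝ) * w := fun j => mul_nonneg (Nat.cast_nonneg j) hwpos.le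
  have hwsum : ((τ * L : ℕ) : ℝ) * w = Δ / 8 := by
    rw [hwdef]
    have h1 : ((τ:ℝ)) ≠ 0 := by exact_mod_cast Nat.one_le_iff_ne_zero.1 hτ
    have h2 : ((L:ℝ)) ≠ 0 := by exact_mod_cast Nat.one_le_iff_ne_zero.1 hL1
    push_cast
    field_simp
  have hdiam8 : fdiam d Y ≤ ((8 * τ * L : ℕ) : ℝ) * w := by
    have h8 : ((8 * τ * L : ℕ) : ℝ) * w = 8 * (((τ * L : ℕ) : ℝ) * w) := by push_cast; ring
    rw [← hΔdef, h8, hwsum]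
    linarith
  set B : ℝ → Finset X := fun t => Y.filter (fun u => d x u ≤ t) with hBdef
  have hBmem : ∀ t u, u ∈ B t ↔ u ∈ Y ∧ d x u ≤ t := by
    intro t u
    rw [hBdef]
    exact Finset.mem_filter
  have hBmono : ∀ {t t' : ℝ}, t ≤ t' → B t ⊆ B t' := by
    intro t t' htt u hu
    rw [hBmem] at *
    exact ⟨hu.1, le_trans hu.2 htt⟩
  have hBsub : ∀ t, B t ⊆ Y := by
    intro t u hu
    rw [hBmem] at hu
    exact hu.1
  have hxB : ∀ t, 0 ≤ t → x ∈ B t := by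
    intro t ht
    rw [hBmem]
    exact ⟨hx, by rw [hd0]; exact ht⟩
  by_cases hcase : 2 * (B (3 * Δ / 8)).card ≤ Y.card
  · -- grow the inner ball
    set g : ℕ → ℕ := fun j => (B (Δ / 4 + j * w)).card with hgdef
    have hg0 : 1 ≤ g 0 := by
      refine Finset.card_pos.mpr ⟨x, hxB _ ?_⟩
      push_cast
      linarith
    obtain ⟨j, hjlt, hjineq⟩ := growth_lemma g τ L hτ hg0
      (lt_of_le_of_lt (Finset.card_le_card (hBsub _)) hY)
    have hcast : ((j+1:ℕ):ℝ) = (j:ℝ) + 1 := by push_cast; ring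
    have hr38 : Δ / 4 + ((j+1:ℕ):ℝ) * w ≤ 3 * Δ / 8 := by
      have hj1 : ((j:ℝ) + 1) ≤ ((τ * L : ℕ) : ℝ) := by exact_mod_cast hjlt
      have h3 : ((j:ℝ)+1) * w ≤ ((τ * L : ℕ):ℝ) * w := by nlinarith
      rw [hwsum] at h3
      rw [hcast]
      linarith
    have hrstep : Δ / 4 + (j:ℝ) * w ≤ Δ / 4 + ((j+1:ℕ):ℝ) * w := by
      rw [hcast]
      linarith
    have hIg : (B (Δ / 4 + (j:ℝ) * w)).card = g j := rfl
    have hI1g : (B (Δ / 4 + ((j+1:ℕ):ℝ) * w)).card = g (j+1) := rfl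
    have hsub : B (Δ / 4 + (j:ℝ) * w) ⊆ B (Δ / 4 + ((j+1:ℕ):ℝ) * w) := hBmono hrstep
    have hcards : (B (Δ / 4 + ((j+1:ℕ):ℝ) * w) \ B (Δ / 4 + (j:ℝ) * w)).card = g (j+1) - g j := by
      rw [Finset.card_sdiff_of_subset hsub, hIg, hI1g]
    have hgm : g j ≤ g (j+1) := by rw [← hIg, ← hI1g]; exact Finset.card_le_card hsub
    have hSI : τ * (g (j+1) - g j) ≤ g j := by
      rw [Nat.mul_sub, Nat.sub_le_iff_le_add]
      calc τ * g (j+1) ≤ (τ+1) * g j := hjineq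
        _ = g j + τ * g j := by ring
    refine ⟨B (Δ / 4 + (j:ℝ) * w), B (Δ / 4 + ((j+1:ℕ):ℝ) * w) \ B (Δ / 4 + (j:ℝ) * w),
      Y \ B (Δ / 4 + ((j+1:ℕ):ℝ) * w), w, ?_, Finset.disjoint_sdiff, ?_, ?_,
      ⟨x, hxB _ (by linarith [hjw j])⟩, ?_, ?_, ?_, hwpos, ?_, hdiam8⟩
    · rw [Finset.union_sdiff_of_subset hsub, Finset.union_sdiff_of_subset (hBsub _)]
    · exact (Finset.disjoint_sdiff (s := B (Δ / 4 + ((j+1:ℕ):ℝ) * w)) (t := Y)).mono_left hsub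
    · exact (Finset.disjoint_sdiff (s := B (Δ / 4 + ((j+1:ℕ):ℝ) * w)) (t := Y)).mono_left
        Finset.sdiff_subset
    · refine ⟨y₀, Finset.mem_sdiff.mpr ⟨hy₀, ?_⟩⟩
      rw [hBmem]
      rintro ⟨-, hc⟩
      rw [← hxy] at hc
      linarith
    · rw [hcards, hIg]
      exact hSI
    · have hOcard : (Y \ B (Δ / 4 + ((j+1:ℕ):ℝ) * w)).card = Y.card - g (j+1) := by
        rw [Finset.card_sdiff_of_subset (hBsub _), hI1g]
      have hM : g (j+1) ≤ (B (3*Δ/8)).card := by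
        rw [← hI1g]
        exact Finset.card_le_card (hBmono hr38)
      rw [hcards, hOcard]
      omega
    · intro u hu v hv
      rw [hBmem] at hu
      rw [Finset.mem_sdiff] at hv
      have hv2 : ¬ (d x v ≤ Δ / 4 + ((j+1:ℕ):ℝ) * w) := fun hc => hv.2 ((hBmem _ _).mpr ⟨hv.1, hc⟩)
      push_neg at hv2
      have htri := hdt x u v
      rw [hcast] at hv2
      have hu2 := hu.2
      linarith
  · -- grow the outer part
    push_neg at hcase
    set g : ℕ → ℕ := fun j => (Y.filter (fun v => Δ / 2 - j * w < d x v)).card with hgdef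
    have hgmem : ∀ (j : ℕ) u, u ∈ Y.filter (fun v => Δ / 2 - (j:ℝ) * w < d x v) ↔
        u ∈ Y ∧ Δ / 2 - (j:ℝ) * w < d x u := fun j u => Finset.mem_filter
    have hg0 : 1 ≤ g 0 := by
      refine Finset.card_pos.mpr ⟨y₀, (hgmem 0 y₀).mpr ⟨hy₀, ?_⟩⟩
      rw [← hxy]
      push_cast
      linarith
    obtain ⟨j, hjlt, hjineq⟩ := growth_lemma g τ L hτ hg0
      (lt_of_le_of_lt (Finset.card_le_card (Finset.filter_subset _ _)) hY)
    have hcast : ((j+1:ℕ):ℝ) = (j:ℝ) + 1 := by push_cast; ring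
    have ht38 : 3 * Δ / 8 ≤ Δ / 2 - ((j+1:ℕ):ℝ) * w := by
      have hj1 : ((j:ℝ) + 1) ≤ ((τ * L : ℕ) : ℝ) := by exact_mod_cast hjlt
      have h3 : ((j:ℝ)+1) * w ≤ ((τ * L : ℕ):ℝ) * w := by nlinarith
      rw [hwsum] at h3
      rw [hcast]
      linarith
    set O : Finset X := Y.filter (fun v => Δ / 2 - (j:ℝ) * w < d x v) with hOdef
    set Og : Finset X := Y.filter (fun v => Δ / 2 - ((j+1:ℕ):ℝ) * w < d x v) with hOgdef
    have hOmem : ∀ u, u ∈ O ↔ u ∈ Y ∧ Δ / 2 - (j:ℝ) * w < d x u := fun u => Finset.mem_filter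
    have hOgmem : ∀ u, u ∈ Og ↔ u ∈ Y ∧ Δ / 2 - ((j+1:ℕ):ℝ) * w < d x u :=
      fun u => Finset.mem_filter
    have hOOg : O ⊆ Og := by
      intro u hu
      rw [hOmem] at hu
      rw [hOgmem]
      refine ⟨hu.1, lt_of_le_of_lt ?_ hu.2⟩
      rw [hcast]
      linarith [hwpos]
    have hOcard : O.card = g j := rfl
    have hOgcard : Og.card = g (j+1) := rfl
    have hB38I : B (3*Δ/8) ⊆ Y \ Og := by
      intro u hu
      rw [hBmem] at hu
      rw [Finset.mem_sdiff]
      refine ⟨hu.1, fun hc => ?_⟩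
      rw [hOgmem] at hc
      linarith [hu.2, hc.2]
    have hOdisj : Disjoint Og (B (3*Δ/8)) := by
      rw [Finset.disjoint_left]
      intro a ha hb
      rw [hOgmem] at ha
      rw [hBmem] at hb
      linarith [ha.2, hb.2]
    have hShcard : (Og \ O).card = g (j+1) - g j := by
      rw [Finset.card_sdiff_of_subset hOOg, hOcard, hOgcard]
    have hgm : g j ≤ g (j+1) := by rw [← hOcard, ← hOgcard]; exact Finset.card_le_card hOOg
    have hSO : τ * (Og \ O).card ≤ g j := by
      rw [hShcard, Nat.mul_sub, Nat.sub_le_iff_le_add]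
      calc τ * g (j+1) ≤ (τ+1) * g j := hjineq
        _ = g j + τ * g j := by ring
    refine ⟨Y \ Og, Og \ O, O, w, ?_, ?_, ?_, ?_, ⟨x, hB38I (hxB _ (by linarith))⟩, ?_, ?_, ?_,
      hwpos, ?_, hdiam8⟩
    · rw [Finset.union_assoc]
      have h1 : Og \ O ∪ O = Og := by
        rw [Finset.sdiff_union_self_eq_union, Finset.union_eq_left.mpr hOOg]
      rw [h1, Finset.sdiff_union_self_eq_union, Finset.union_eq_left.mpr]
      rw [hOgdef]
      exact Finset.filter_subset _ _
    · exact (Finset.sdiff_disjoint (s := Og) (t := Y)).mono_right Finset.sdiff_subset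
    · exact (Finset.sdiff_disjoint (s := Og) (t := Y)).mono_right hOOg
    · exact Finset.sdiff_disjoint (s := O) (t := Og)
    · refine ⟨y₀, (hOmem y₀).mpr ⟨hy₀, ?_⟩⟩
      rw [← hxy]
      linarith [hjw j]
    · -- τ * Sh ≤ I
      have hMI : (B (3*Δ/8)).card ≤ (Y \ Og).card := Finset.card_le_card hB38I
      have hOM : g (j+1) + (B (3*Δ/8)).card ≤ Y.card := by
        rw [← hOgcard]
        calc Og.card + (B (3*Δ/8)).card = (Og ∪ B (3*Δ/8)).card := by
              rw [Finset.card_union_of_disjoint hOdisj]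
          _ ≤ Y.card := Finset.card_le_card (Finset.union_subset
              (by rw [hOgdef]; exact Finset.filter_subset _ _) (hBsub _))
      omega
    · rw [hOcard]
      exact hSO
    · intro u hu v hv
      rw [Finset.mem_sdiff] at hu
      have hu2 : d x u ≤ Δ / 2 - ((j+1:ℕ):ℝ) * w := by
        by_contra hc
        push_neg at hc
        exact hu.2 ((hOgmem u).mpr ⟨hu.1, hc⟩)
      rw [hOmem] at hv
      have htri := hdt x u v
      rw [hcast] at hu2
      linarith [hv.2]


/-! ### the ultrametric-with-deletions lemma -/

lemma potential_lemma (a b n : ℕ) (ha : 1 ≤ a) (hb : 1 ≤ b) (hab : a + b ≤ n) :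
    min a b + a * Nat.log 2 a + b * Nat.log 2 b ≤ n * Nat.log 2 n := by
  wlog hle : a ≤ b generalizing a b
  · have h := this b a hb ha (by omega) (by omega)
    omega
  have h1 : min a b = a := by omega
  have h2 : Nat.log 2 a + 1 = Nat.log 2 (a * 2) :=
    (Nat.log_mul_base (by norm_num) (by omega)).symm
  have h3 : Nat.log 2 (a * 2) ≤ Nat.log 2 n := Nat.log_mono_right (by omega)
  have h4 : Nat.log 2 b ≤ Nat.log 2 n := Nat.log_mono_right (by omega)
  have h5 : Nat.log 2 a + 1 ≤ Nat.log 2 n := by omega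
  calc min a b + a * Nat.log 2 a + b * Nat.log 2 b
      = a * (Nat.log 2 a + 1) + b * Nat.log 2 b := by rw [h1]; ring
    _ ≤ a * Nat.log 2 n + b * Nat.log 2 n :=
        Nat.add_le_add (Nat.mul_le_mul_left a h5) (Nat.mul_le_mul_left b h4)
    _ = (a + b) * Nat.log 2 n := by ring
    _ ≤ n * Nat.log 2 n := Nat.mul_le_mul_right _ hab

/-- the conclusion of the ultrametric approximation lemma -/
def UltraGood (d : X → X → ℝ) (τ L : ℕ) (Y W : Finset X) (lam : X → X → ℝ) : Prop :=
  W ⊆ Y ∧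
  τ * (Y \ W).card ≤ Y.card * Nat.log 2 Y.card ∧
  (∀ u ∈ W, lam u u = 0) ∧
  (∀ u ∈ W, ∀ v ∈ W, lam u v = lam v u) ∧
  (∀ u ∈ W, ∀ v ∈ W, d u v ≤ lam u v) ∧
  (∀ u ∈ W, ∀ v ∈ W, ∀ x ∈ W, lam u x ≤ max (lam u v) (lam v x)) ∧
  (∀ u ∈ W, ∀ v ∈ W, u ≠ v → ∃ i : ℕ, lam u v = 2 ^ i) ∧
  (∀ u ∈ W, ∀ v ∈ W, lam u v ≤ ((64 * τ * L : ℕ) : ℝ) * d u v) ∧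
  (∀ u ∈ W, ∀ v ∈ W, lam u v ≤ pow2c (2 * fdiam d Y))

lemma ultra_base (d : X → X → ℝ) (hd : IsMetricGE1 d) (τ L : ℕ)
    (Y : Finset X) (h1 : Y.card ≤ 1) :
    ∃ (W : Finset X) (lam : X → X → ℝ), UltraGood d τ L Y W lam := by
  obtain ⟨hd0, hds, hdt, hd1⟩ := hd
  have hdn : ∀ x y : X, 0 ≤ d x y := IsMetricGE1.nonneg ⟨hd0, hds, hdt, hd1⟩
  have heq : ∀ u ∈ Y, ∀ v ∈ Y, u = v := fun u hu v hv => Finset.card_le_one.mp h1 u hu v hv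
  refine ⟨Y, fun _ _ => 0, Finset.Subset.refl Y, by simp, by simp, by simp, ?_, by
    intro u hu v hv x hx
    simp, ?_, ?_, ?_⟩
  · intro u hu v hv
    rw [heq u hu v hv, hd0]
  · intro u hu v hv huv
    exact absurd (heq u hu v hv) huv
  · intro u hu v hv
    exact mul_nonneg (Nat.cast_nonneg _) (hdn u v)
  · intro u hu v hv
    exact (pow2c_pos _).le

lemma ultra_approx (d : X → X → ℝ) (hd : IsMetricGE1 d) (τ L : ℕ) (hτ : 1 ≤ τ) :
    ∀ (n : ℕ) (Y : Finset X), Y.card ≤ n → Y.card < 2 ^ L →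
    ∃ (W : Finset X) (lam : X → X → ℝ), UltraGood d τ L Y W lam := by
  intro n
  induction n with
  | zero =>
    intro Y hY _
    exact ultra_base d hd τ L Y (by omega)
  | succ n ih =>
    intro Y hYn hYL
    by_cases h1 : Y.card ≤ 1
    · exact ultra_base d hd τ L Y h1
    push_neg at h1
    obtain ⟨hd0, hds, hdt, hd1⟩ := hd
    have hdn : ∀ x y : X, 0 ≤ d x y := IsMetricGE1.nonneg ⟨hd0, hds, hdt, hd1⟩
    obtain ⟨I, S, O, w, hunion, hIS, hIO, hSO, hIne, hOne, hSI, hSOc, hwpos, hgap, hdiam⟩ :=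
      cut_lemma d ⟨hd0, hds, hdt, hd1⟩ Y h1 τ L hτ hYL
    have hIY : I ⊆ Y := by
      rw [← hunion]
      intro u hu
      simp [Finset.mem_union, hu]
    have hSY : S ⊆ Y := by
      rw [← hunion]
      intro u hu
      simp [Finset.mem_union, hu]
    have hOY : O ⊆ Y := by
      rw [← hunion]
      intro u hu
      simp [Finset.mem_union, hu]
    have hIcard : I.card < Y.card := by
      obtain ⟨o, ho⟩ := hOne
      refine Finset.card_lt_card (Finset.ssubset_iff_of_subset hIY |>.mpr ⟨o, hOY ho, ?_⟩)
      exact fun hoI => (Finset.disjoint_left.mp hIO) hoI ho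
    have hOcard : O.card < Y.card := by
      obtain ⟨o, ho⟩ := hIne
      refine Finset.card_lt_card (Finset.ssubset_iff_of_subset hOY |>.mpr ⟨o, hIY ho, ?_⟩)
      exact fun hoI => (Finset.disjoint_left.mp hIO) ho hoI
    obtain ⟨WI, lamI, hWIsub, hWIcard, hI0, hIsym, hIexp, hIst, hIpow, hIdist, hIcap⟩ :=
      ih I (by omega) (by omega)
    obtain ⟨WO, lamO, hWOsub, hWOcard, hO0, hOsym, hOexp, hOst, hOpow, hOdist, hOcap⟩ :=
      ih O (by omega) (by omega)
    set P : ℝ := pow2c (2 * fdiam d Y) with hPdef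
    set lam : X → X → ℝ := fun u v =>
      if u ∈ WI ∧ v ∈ WI then lamI u v
      else if u ∈ WO ∧ v ∈ WO then lamO u v
      else if u = v then 0 else P with hlamdef
    have hWdisj : ∀ u, u ∈ WI → u ∈ WO → False := by
      intro u huI huO
      exact (Finset.disjoint_left.mp hIO) (hWIsub huI) (hWOsub huO)
    have lam_II : ∀ {u v}, u ∈ WI → v ∈ WI → lam u v = lamI u v := by
      intro u v hu hv
      rw [hlamdef]
      simp only [if_pos (And.intro hu hv)]
    have lam_OO : ∀ {u v}, u ∈ WO → v ∈ WO → lam u v = lamO u v := by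
      intro u v hu hv
      rw [hlamdef]
      simp only
      rw [if_neg (fun hc => hWdisj u hc.1 hu), if_pos (And.intro hu hv)]
    have lam_IO : ∀ {u v}, u ∈ WI → v ∈ WO → lam u v = P := by
      intro u v hu hv
      rw [hlamdef]
      simp only
      rw [if_neg (fun hc => hWdisj v hc.2 hv), if_neg (fun hc => hWdisj u hu hc.1),
        if_neg (fun (hc : u = v) => hWdisj u hu (by rw [hc]; exact hv))]
    have lam_OI : ∀ {u v}, u ∈ WO → v ∈ WI → lam u v = P := by
      intro u v hu hv
      rw [hlamdef]
      simp only
      rw [if_neg (fun hc => hWdisj u hc.1 hu), if_neg (fun hc => hWdisj v hv hc.2),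
        if_neg (fun (hc : u = v) => hWdisj v hv (by rw [← hc]; exact hu))]
    have hmemW : ∀ u, u ∈ WI ∪ WO → (u ∈ WI) ∨ (u ∈ WO) := by
      intro u hu
      exact Finset.mem_union.mp hu
    have hWIY : ∀ {u}, u ∈ WI → u ∈ Y := fun hu => hIY (hWIsub hu)
    have hWOY : ∀ {u}, u ∈ WO → u ∈ Y := fun hu => hOY (hWOsub hu)
    -- diameter facts
    have hΔ1 : 1 ≤ fdiam d Y := by
      obtain ⟨a, ha, b, hb, hab⟩ := Finset.one_lt_card.mp h1
      exact le_trans (hd1 a b hab) (le_fdiam ha hb)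
    have hPle : P ≤ ((64 * τ * L : ℕ) : ℝ) * w := by
      have h2 : (1:ℝ) ≤ 2 * fdiam d Y := by linarith
      have h3 : P ≤ 4 * (2 * fdiam d Y) := pow2c_le h2
      have h4 : 8 * (((8 * τ * L : ℕ):ℝ) * w) = ((64 * τ * L : ℕ) : ℝ) * w := by
        push_cast
        ring
      calc P ≤ 4 * (2 * fdiam d Y) := h3
        _ = 8 * fdiam d Y := by ring
        _ ≤ 8 * (((8 * τ * L : ℕ):ℝ) * w) := by linarith
        _ = ((64 * τ * L : ℕ) : ℝ) * w := h4
    have hcapI : pow2c (2 * fdiam d I) ≤ P := by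
      rw [hPdef]
      apply pow2c_mono
      have := fdiam_mono (f := d) (fun u _ v _ => hdn u v) hIY
      linarith
    have hcapO : pow2c (2 * fdiam d O) ≤ P := by
      rw [hPdef]
      apply pow2c_mono
      have := fdiam_mono (f := d) (fun u _ v _ => hdn u v) hOY
      linarith
    have hPpos : 0 < P := pow2c_pos _
    refine ⟨WI ∪ WO, lam, ?_, ?_, ?_, ?_, ?_, ?_, ?_, ?_, ?_⟩
    · exact Finset.union_subset (hWIsub.trans hIY) (hWOsub.trans hOY)
    · -- cardinality accounting
      have hsub2 : Y \ (WI ∪ WO) ⊆ (I \ WI) ∪ S ∪ (O \ WO) := by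
        intro u hu
        rw [Finset.mem_sdiff] at hu
        have huY := hu.1
        rw [← hunion] at huY
        rcases Finset.mem_union.mp huY with h | h
        · rcases Finset.mem_union.mp h with h' | h'
          · exact Finset.mem_union.mpr (Or.inl (Finset.mem_union.mpr (Or.inl
              (Finset.mem_sdiff.mpr ⟨h', fun hc => hu.2 (Finset.mem_union.mpr (Or.inl hc))⟩))))
          · exact Finset.mem_union.mpr (Or.inl (Finset.mem_union.mpr (Or.inr h')))
        · exact Finset.mem_union.mpr (Or.inr
            (Finset.mem_sdiff.mpr ⟨h, fun hc => hu.2 (Finset.mem_union.mpr (Or.inr hc))⟩))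
      have hcard2 : (Y \ (WI ∪ WO)).card ≤ (I \ WI).card + S.card + (O \ WO).card := by
        calc (Y \ (WI ∪ WO)).card ≤ ((I \ WI) ∪ S ∪ (O \ WO)).card := Finset.card_le_card hsub2
          _ ≤ ((I \ WI) ∪ S).card + (O \ WO).card := Finset.card_union_le _ _
          _ ≤ (I \ WI).card + S.card + (O \ WO).card := by
              have := Finset.card_union_le (I \ WI) S
              omega
      have hIne1 : 1 ≤ I.card := Finset.card_pos.mpr hIne
      have hOne1 : 1 ≤ O.card := Finset.card_pos.mpr hOne
      have hIOY : I.card + O.card ≤ Y.card := by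
        have : (I ∪ O).card = I.card + O.card := Finset.card_union_of_disjoint hIO
        rw [← this]
        apply Finset.card_le_card
        rw [← hunion]
        intro u hu
        rcases Finset.mem_union.mp hu with h | h
        · exact Finset.mem_union.mpr (Or.inl (Finset.mem_union.mpr (Or.inl h)))
        · exact Finset.mem_union.mpr (Or.inr h)
      have hpot := potential_lemma I.card O.card Y.card hIne1 hOne1 hIOY
      have hminS : τ * S.card ≤ min I.card O.card := le_min hSI hSOc
      calc τ * (Y \ (WI ∪ WO)).card
          ≤ τ * ((I \ WI).card + S.card + (O \ WO).card) := Nat.mul_le_mul_left τ hcard2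
        _ = τ * S.card + τ * (I \ WI).card + τ * (O \ WO).card := by ring
        _ ≤ min I.card O.card + I.card * Nat.log 2 I.card + O.card * Nat.log 2 O.card := by
            have := hWIcard
            have := hWOcard
            omega
        _ ≤ Y.card * Nat.log 2 Y.card := hpot
    · -- diagonal
      intro u hu
      rcases hmemW u hu with h | h
      · rw [lam_II h h]
        exact hI0 u h
      · rw [lam_OO h h]
        exact hO0 u h
    · -- symmetry
      intro u hu v hv
      rcases hmemW u hu with h | h <;> rcases hmemW v hv with h' | h'
      · rw [lam_II h h', lam_II h' h]
        exact hIsym u h v h'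
      · rw [lam_IO h h', lam_OI h' h]
      · rw [lam_OI h h', lam_IO h' h]
      · rw [lam_OO h h', lam_OO h' h]
        exact hOsym u h v h'
    · -- expansion
      intro u hu v hv
      rcases hmemW u hu with h | h <;> rcases hmemW v hv with h' | h'
      · rw [lam_II h h']
        exact hIexp u h v h'
      · rw [lam_IO h h']
        calc d u v ≤ fdiam d Y := le_fdiam (hWIY h) (hWOY h')
          _ ≤ 2 * fdiam d Y := by linarith
          _ ≤ P := le_pow2c _
      · rw [lam_OI h h']
        calc d u v ≤ fdiam d Y := le_fdiam (hWOY h) (hWIY h')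
          _ ≤ 2 * fdiam d Y := by linarith
          _ ≤ P := le_pow2c _
      · rw [lam_OO h h']
        exact hOexp u h v h'
    · -- strong triangle inequality
      intro u hu v hv x hx
      have hcapI' : ∀ {a b}, a ∈ WI → b ∈ WI → lamI a b ≤ P :=
        fun ha hb => le_trans (hIcap _ ha _ hb) hcapI
      have hcapO' : ∀ {a b}, a ∈ WO → b ∈ WO → lamO a b ≤ P :=
        fun ha hb => le_trans (hOcap _ ha _ hb) hcapO
      rcases hmemW u hu with h | h <;> rcases hmemW x hx with h'' | h'' <;>
        rcases hmemW v hv with h' | h'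
      · rw [lam_II h h'', lam_II h h', lam_II h' h'']
        exact hIst u h v h' x h''
      · rw [lam_II h h'', lam_IO h h', lam_OI h' h'']
        exact le_trans (hcapI' h h'') (le_max_left _ _)
      · rw [lam_IO h h'', lam_II h h', lam_IO h' h'']
        exact le_max_right _ _
      · rw [lam_IO h h'', lam_IO h h']
        exact le_max_left _ _
      · rw [lam_OI h h'', lam_OI h h']
        exact le_max_left _ _
      · rw [lam_OI h h'', lam_OO h h', lam_OI h' h'']
        exact le_max_right _ _
      · rw [lam_OO h h'', lam_OI h h', lam_IO h' h'']
        exact le_trans (hcapO' h h'') (le_max_left _ _)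
      · rw [lam_OO h h'', lam_OO h h', lam_OO h' h'']
        exact hOst u h v h' x h''
    · -- powers of two
      intro u hu v hv huv
      rcases hmemW u hu with h | h <;> rcases hmemW v hv with h' | h'
      · rw [lam_II h h']
        exact hIpow u h v h' huv
      · rw [lam_IO h h']
        exact pow2c_isPow _
      · rw [lam_OI h h']
        exact pow2c_isPow _
      · rw [lam_OO h h']
        exact hOpow u h v h' huv
    · -- distortion
      intro u hu v hv
      rcases hmemW u hu with h | h <;> rcases hmemW v hv with h' | h'
      · rw [lam_II h h']
        exact hIdist u h v h'
      · rw [lam_IO h h']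
        calc P ≤ ((64 * τ * L : ℕ) : ℝ) * w := hPle
          _ ≤ ((64 * τ * L : ℕ) : ℝ) * d u v := by
              have := hgap u (hWIsub h) v (hWOsub h')
              have hnn : (0:ℝ) ≤ ((64 * τ * L : ℕ) : ℝ) := Nat.cast_nonneg _
              exact mul_le_mul_of_nonneg_left this hnn
      · rw [lam_OI h h']
        calc P ≤ ((64 * τ * L : ℕ) : ℝ) * w := hPle
          _ ≤ ((64 * τ * L : ℕ) : ℝ) * d u v := by
              have := hgap v (hWIsub h') u (hWOsub h)
              rw [hds v u] at this
              have hnn : (0:ℝ) ≤ ((64 * τ * L : ℕ) : ℝ) := Nat.cast_nonneg _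
              exact mul_le_mul_of_nonneg_left this hnn
      · rw [lam_OO h h']
        exact hOdist u h v h'
    · -- cap
      intro u hu v hv
      rcases hmemW u hu with h | h <;> rcases hmemW v hv with h' | h'
      · rw [lam_II h h']
        exact le_trans (hIcap u h v h') hcapI
      · rw [lam_IO h h']
      · rw [lam_OI h h']
      · rw [lam_OO h h']
        exact le_trans (hOcap u h v h') hcapO



lemma max_pow2 (i j : ℕ) : max ((2:ℝ)^i) (2^j) = 2 ^ (max i j) := by
  rcases le_total i j with h | h
  · rw [max_eq_right (pow_le_pow_right₀ one_le_two h), Nat.max_eq_right h]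
  · rw [max_eq_left (pow_le_pow_right₀ one_le_two h), Nat.max_eq_left h]


lemma mul4_max (b c : ℝ) : max (4*b) (4*c) = 4 * max b c := by
  rcases le_total b c with h | h
  · rw [max_eq_right h, max_eq_right (by linarith : 4*b ≤ 4*c)]
  · rw [max_eq_left h, max_eq_left (by linarith : 4*c ≤ 4*b)]

/-! ### gluing a deleted ultrametric on the outliers with the embedding of Z -/

lemma glue (d : X → X → ℝ) (hd : IsMetricGE1 d) (c : ℝ) (hc : 1 ≤ c)
    (Z : Finset X) (hZne : Z.Nonempty) (hemb : ProbHSTEmbedding (↑Z : Set X) d c)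
    (W : Finset X) (hWZ : ∀ y ∈ W, y ∉ Z)
    (lam : X → X → ℝ) (G : ℝ) (hG : 1 ≤ G)
    (hl0 : ∀ u ∈ W, lam u u = 0)
    (hlsym : ∀ u ∈ W, ∀ v ∈ W, lam u v = lam v u)
    (hlexp : ∀ u ∈ W, ∀ v ∈ W, d u v ≤ lam u v)
    (hlst : ∀ u ∈ W, ∀ v ∈ W, ∀ x ∈ W, lam u x ≤ max (lam u v) (lam v x))
    (hlpow : ∀ u ∈ W, ∀ v ∈ W, u ≠ v → ∃ i : ℕ, lam u v = 2 ^ i)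
    (hldist : ∀ u ∈ W, ∀ v ∈ W, lam u v ≤ G * d u v) :
    ProbHSTEmbedding (↑(Z ∪ W) : Set X) d (512 * G * c) := by
  obtain ⟨hd0, hds, hdt, hd1⟩ := hd
  have hdn : ∀ x y : X, 0 ≤ d x y := IsMetricGE1.nonneg ⟨hd0, hds, hdt, hd1⟩
  have hlnn : ∀ u ∈ W, ∀ v ∈ W, 0 ≤ lam u v := fun u hu v hv => (hdn u v).trans (hlexp u hu v hv)
  -- distance to Z
  set r : X → ℝ := fun y => Z.inf' hZne (d y) with hr
  have hrle : ∀ y, ∀ z ∈ Z, r y ≤ d y z := fun y z hz => Finset.inf'_le _ hz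
  have hrex : ∀ y, ∃ z ∈ Z, r y = d y z := fun y => Finset.exists_mem_eq_inf' hZne (d y)
  have hrnn : ∀ y, 0 ≤ r y := by
    intro y
    obtain ⟨z, hz, hzr⟩ := hrex y
    rw [hzr]
    exact hdn y z
  have hr1 : ∀ y ∈ W, 1 ≤ r y := by
    intro y hy
    obtain ⟨z, hz, hzr⟩ := hrex y
    rw [hzr]
    exact hd1 y z (fun h => hWZ y hy (h ▸ hz))
  have hrzero : ∀ z ∈ Z, r z = 0 := by
    intro z hz
    have h1 := hrle z z hz
    rw [hd0] at h1
    exact le_antisymm h1 (hrnn z)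
  -- admissible balls
  set Adm : Finset X → Prop := fun B => ∀ u ∈ B, ∀ v ∈ B, ∀ x ∈ B, lam u v ≤ r x with hAdm
  set ballW : X → ℝ → Finset X := fun y s => W.filter (fun u => lam y u ≤ s) with hballW
  have hballmem : ∀ y s u, u ∈ ballW y s ↔ u ∈ W ∧ lam y u ≤ s := fun y s u => Finset.mem_filter
  have hballsub : ∀ y s, ballW y s ⊆ W := fun y s => Finset.filter_subset _ _
  have hballmono : ∀ y {s s'}, s ≤ s' → ballW y s ⊆ ballW y s' := by
    intro y s s' hss u hu
    rw [hballmem] at *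
    exact ⟨hu.1, hu.2.trans hss⟩
  set T : X → Finset ℝ := fun y => (W.image (lam y)).filter (fun s => Adm (ballW y s)) with hT
  have hTmem : ∀ y s, s ∈ T y ↔ (∃ u ∈ W, lam y u = s) ∧ Adm (ballW y s) := by
    intro y s
    rw [hT]
    simp only [Finset.mem_filter, Finset.mem_image]
  have hTne : ∀ y ∈ W, (T y).Nonempty := by
    intro y hy
    refine ⟨0, (hTmem y 0).mpr ⟨⟨y, hy, hl0 y hy⟩, ?_⟩⟩
    have hb : ∀ u, u ∈ ballW y 0 → u = y := by
      intro u hu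
      rw [hballmem] at hu
      by_contra hne
      have := hd1 y u (fun h => hne h.symm)
      have := hlexp y hy u hu.1
      linarith [hu.2]
    intro u hu v hv x hx
    rw [hb u hu, hb v hv]
    rw [hl0 y hy]
    have hxW : x ∈ W := hballsub y 0 hx
    linarith [hr1 x hxW]
  set tstar : X → ℝ := fun y => if h : (T y).Nonempty then (T y).max' h else 0 with htstar
  have htmax : ∀ y ∈ W, tstar y ∈ T y ∧ ∀ s ∈ T y, s ≤ tstar y := by
    intro y hy
    rw [htstar]
    simp only [dif_pos (hTne y hy)]
    exact ⟨Finset.max'_mem _ _, fun s hs => Finset.le_max' _ s hs⟩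
  set Cl : X → Finset X := fun y => if y ∈ W then ballW y (tstar y) else ∅ with hCl
  have hClW : ∀ y ∈ W, Cl y = ballW y (tstar y) := by
    intro y hy
    rw [hCl]
    simp only [if_pos hy]
  have hClnW : ∀ y, y ∉ W → Cl y = ∅ := by
    intro y hy
    rw [hCl]
    simp only [if_neg hy]
  have htstar0 : ∀ y ∈ W, 0 ≤ tstar y := by
    intro y hy
    refine le_trans ?_ ((htmax y hy).2 0 ?_)
    · exact le_refl 0
    · refine (hTmem y 0).mpr ⟨⟨y, hy, hl0 y hy⟩, ?_⟩
      have hb : ∀ u, u ∈ ballW y 0 → u = y := by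
        intro u hu
        rw [hballmem] at hu
        by_contra hne
        have := hd1 y u (fun h => hne h.symm)
        have := hlexp y hy u hu.1
        linarith [hu.2]
      intro u hu v hv x hx
      rw [hb u hu, hb v hv, hl0 y hy]
      linarith [hr1 x (hballsub y 0 hx)]
  have hmemCl : ∀ y ∈ W, y ∈ Cl y := by
    intro y hy
    rw [hClW y hy, hballmem, hl0 y hy]
    exact ⟨hy, htstar0 y hy⟩
  have hClsubW : ∀ y, Cl y ⊆ W := by
    intro y
    by_cases hy : y ∈ W
    · rw [hClW y hy]; exact hballsub _ _
    · rw [hClnW y hy]; exact Finset.empty_subset _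
  have hCladm : ∀ y ∈ W, Adm (Cl y) := by
    intro y hy
    rw [hClW y hy]
    exact ((hTmem y (tstar y)).mp (htmax y hy).1).2
  have hClmem : ∀ y ∈ W, ∀ u, u ∈ Cl y ↔ u ∈ W ∧ lam y u ≤ tstar y := by
    intro y hy u
    rw [hClW y hy]
    exact hballmem _ _ _
  -- claim A : admissible balls around a member are inside the cluster
  have claimA : ∀ y ∈ W, ∀ y' ∈ Cl y, Cl y ⊆ Cl y' := by
    intro y hy y' hy'
    have hy'W : y' ∈ W := hClsubW y hy'
    have hyy' : lam y y' ≤ tstar y := ((hClmem y hy y').mp hy').2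
    -- effective radius around y'
    have hClne : (Cl y).Nonempty := ⟨y, hmemCl y hy⟩
    obtain ⟨u₀, hu₀, hu₀max⟩ := Finset.exists_max_image (Cl y) (lam y') hClne
    have hu₀W : u₀ ∈ W := hClsubW y hu₀
    have hyu₀ : lam y u₀ ≤ tstar y := ((hClmem y hy u₀).mp hu₀).2
    have hu₀t : lam y' u₀ ≤ tstar y := by
      calc lam y' u₀ ≤ max (lam y' y) (lam y u₀) := hlst y' hy'W y hy u₀ hu₀W
        _ ≤ tstar y := by
            rw [hlsym y' hy'W y hy]
            exact max_le hyy' hyu₀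
    have hballeq : ballW y' (lam y' u₀) = Cl y := by
      apply Finset.Subset.antisymm
      · intro u hu
        rw [hballmem] at hu
        rw [hClmem y hy]
        refine ⟨hu.1, ?_⟩
        calc lam y u ≤ max (lam y y') (lam y' u) := hlst y hy y' hy'W u hu.1
          _ ≤ tstar y := max_le hyy' (hu.2.trans hu₀t)
      · intro u hu
        rw [hballmem]
        exact ⟨hClsubW y hu, hu₀max u hu⟩
    have hTy' : lam y' u₀ ∈ T y' := by
      refine (hTmem y' (lam y' u₀)).mpr ⟨⟨u₀, hu₀W, rfl⟩, ?_⟩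
      rw [hballeq]
      exact hCladm y hy
    have hle : lam y' u₀ ≤ tstar y' := (htmax y' hy'W).2 _ hTy'
    calc Cl y = ballW y' (lam y' u₀) := hballeq.symm
      _ ⊆ ballW y' (tstar y') := hballmono y' hle
      _ = Cl y' := (hClW y' hy'W).symm
  have hCleq : ∀ y ∈ W, ∀ y' ∈ Cl y, Cl y' = Cl y := by
    intro y hy y' hy'
    have hy'W : y' ∈ W := hClsubW y hy'
    have h1 : Cl y ⊆ Cl y' := claimA y hy y' hy'
    have h2 : Cl y' ⊆ Cl y := claimA y' hy'W y (h1 (hmemCl y hy))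
    exact Finset.Subset.antisymm h2 h1
  -- inadmissibility of the joint ball for separated pairs
  have hsep : ∀ y ∈ W, ∀ y' ∈ W, Cl y ≠ Cl y' → tstar y < lam y y' ∧ r y ≤ 2 * lam y y' := by
    intro y hy y' hy' hne
    have hy'notin : y' ∉ Cl y := fun hc => hne ((hCleq y hy y' hc)).symm
    have htlt : tstar y < lam y y' := by
      by_contra hle
      push_neg at hle
      exact hy'notin ((hClmem y hy y').mpr ⟨hy', hle⟩)
    refine ⟨htlt, ?_⟩
    -- the ball of radius lam y y' is inadmissible
    have hinadm : ¬ Adm (ballW y (lam y y')) := by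
      intro hadm
      have hBne : (ballW y (lam y y')).Nonempty := by
        refine ⟨y, ?_⟩
        rw [hballmem, hl0 y hy]
        exact ⟨hy, hlnn y hy y' hy'⟩
      obtain ⟨u₁, hu₁, hu₁max⟩ := Finset.exists_max_image (ballW y (lam y y')) (lam y) hBne
      have hu₁W : u₁ ∈ W := hballsub _ _ hu₁
      have hballeq : ballW y (lam y u₁) = ballW y (lam y y') := by
        apply Finset.Subset.antisymm
        · apply hballmono
          exact ((hballmem _ _ _).mp hu₁).2
        · intro u hu
          rw [hballmem]
          exact ⟨hballsub _ _ hu, hu₁max u hu⟩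
      have hTy : lam y u₁ ∈ T y := by
        refine (hTmem y (lam y u₁)).mpr ⟨⟨u₁, hu₁W, rfl⟩, ?_⟩
        rw [hballeq]
        exact hadm
      have h2 : lam y u₁ ≤ tstar y := (htmax y hy).2 _ hTy
      have h3 : lam y y' ≤ lam y u₁ := by
        apply hu₁max
        rw [hballmem]
        exact ⟨hy', le_refl _⟩
      linarith
    -- extract a point with small r
    have hinadm2 : ∃ u ∈ ballW y (lam y y'), ∃ v ∈ ballW y (lam y y'),
        ∃ x ∈ ballW y (lam y y'), r x < lam u v := by
      by_contra hcon
      push_neg at hcon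
      exact hinadm (fun u hu v hv x hx => hcon u hu v hv x hx)
    obtain ⟨u, hu, v, hv, x, hx, hlamr⟩ := hinadm2
    have huW : u ∈ W := hballsub _ _ hu
    have hvW : v ∈ W := hballsub _ _ hv
    have hxW : x ∈ W := hballsub _ _ hx
    have hxle : lam y x ≤ lam y y' := ((hballmem _ _ _).mp hx).2
    have hrx : r x < lam u v := hlamr
    have hluv : lam u v ≤ lam y y' := by
      calc lam u v ≤ max (lam u y) (lam y v) := hlst u huW y hy v hvW
        _ ≤ lam y y' := by
            rw [hlsym u huW y hy]
            exact max_le ((hballmem _ _ _).mp hu).2 ((hballmem _ _ _).mp hv).2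
    calc r y ≤ d y x + r x := by
          obtain ⟨z, hz, hzr⟩ := hrex x
          calc r y ≤ d y z := hrle y z hz
            _ ≤ d y x + d x z := hdt y x z
            _ = d y x + r x := by rw [hzr]
      _ ≤ lam y x + r x := by linarith [hlexp y hy x hxW]
      _ ≤ 2 * lam y y' := by linarith
  -- cluster quantities
  set rinf : Finset X → ℝ := fun B => if h : B.Nonempty then B.inf' h r else 0 with hrinf
  have hrinfle : ∀ B : Finset X, ∀ x ∈ B, rinf B ≤ r x := by
    intro B x hx
    have hB : B.Nonempty := ⟨x, hx⟩
    rw [hrinf]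
    simp only [dif_pos hB]
    exact Finset.inf'_le _ hx
  have hrinfge : ∀ (B : Finset X) (hB : B.Nonempty) (a : ℝ), (∀ x ∈ B, a ≤ r x) → a ≤ rinf B := by
    intro B hB a ha
    rw [hrinf]
    simp only [dif_pos hB]
    exact Finset.le_inf' hB _ ha
  have hrinfW : ∀ y ∈ W, 1 ≤ rinf (Cl y) := fun y hy =>
    hrinfge _ ⟨y, hmemCl y hy⟩ 1 (fun x hx => hr1 x (hClsubW y hx))
  have hfd_adm : ∀ y ∈ W, fdiam lam (Cl y) ≤ rinf (Cl y) := by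
    intro y hy
    obtain ⟨u, hu, v, hv, huv⟩ := exists_fdiam_eq (f := lam) (Y := Cl y) ⟨y, hmemCl y hy⟩
    rw [huv]
    exact hrinfge _ ⟨y, hmemCl y hy⟩ _ (fun x hx => hCladm y hy u hu v hv x hx)
  have hfd_nn : ∀ y ∈ W, 0 ≤ fdiam lam (Cl y) :=
    fun y hy => fdiam_nonneg (fun u hu v hv => hlnn u (hClsubW y hu) v (hClsubW y hv))
  have hfd_le : ∀ y ∈ W, ∀ u ∈ Cl y, ∀ v ∈ Cl y, lam u v ≤ fdiam lam (Cl y) :=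
    fun y hy u hu v hv => le_fdiam hu hv
  set t : X → ℝ := fun y => pow2c (8 * (fdiam lam (Cl y) + rinf (Cl y))) with ht
  have ht8 : ∀ y ∈ W, 8 * (fdiam lam (Cl y) + rinf (Cl y)) ≤ t y := fun y hy => le_pow2c _
  have htle : ∀ y ∈ W, t y ≤ 32 * (fdiam lam (Cl y) + rinf (Cl y)) := by
    intro y hy
    have h2 := hfd_nn y hy
    have h3 := hrinfW y hy
    have h1 : (1:ℝ) ≤ 8 * (fdiam lam (Cl y) + rinf (Cl y)) := by nlinarith
    calc t y ≤ 4 * (8 * (fdiam lam (Cl y) + rinf (Cl y))) := pow2c_le h1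
      _ = 32 * (fdiam lam (Cl y) + rinf (Cl y)) := by ring
  have htpos : ∀ y, 0 < t y := fun y => pow2c_pos _
  have ht64 : ∀ y ∈ W, ∀ x ∈ Cl y, t y ≤ 64 * r x := by
    intro y hy x hx
    have h1 := htle y hy
    have h2 := hfd_adm y hy
    have h3 := hrinfle (Cl y) x hx
    linarith
  have htfd : ∀ y ∈ W, 8 * fdiam lam (Cl y) ≤ t y := by
    intro y hy
    have h1 := ht8 y hy
    have h2 := hrinfW y hy
    linarith
  have htcross : ∀ y ∈ W, ∀ y' ∈ W, Cl y ≠ Cl y' → t y ≤ 96 * lam y y' := by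
    intro y hy y' hy' hne
    obtain ⟨htlt, hr2⟩ := hsep y hy y' hy' hne
    have hfd : fdiam lam (Cl y) ≤ lam y y' := by
      apply fdiam_le (hlnn y hy y' hy')
      intro u hu v hv
      have huW := hClsubW y hu
      have hvW := hClsubW y hv
      calc lam u v ≤ max (lam u y) (lam y v) := hlst u huW y hy v hvW
        _ ≤ tstar y := by
            rw [hlsym u huW y hy]
            exact max_le ((hClmem y hy u).mp hu).2 ((hClmem y hy v).mp hv).2
        _ ≤ lam y y' := htlt.le
    have hri : rinf (Cl y) ≤ 2 * lam y y' := le_trans (hrinfle _ y (hmemCl y hy)) hr2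
    have h1 := htle y hy
    linarith
  -- attachment points
  set znear : X → X := fun x => (hrex x).choose with hzn
  have hznZ : ∀ x, znear x ∈ Z ∧ r x = d x (znear x) := by
    intro x
    have h := (hrex x).choose_spec
    exact ⟨h.1, h.2⟩
  set um : Finset X → X := fun B => if h : B.Nonempty then
      (Finset.exists_mem_eq_inf' h r).choose else hZne.choose with hum
  have humspec : ∀ (B : Finset X), B.Nonempty → um B ∈ B ∧ rinf B = r (um B) := by
    intro B hB
    rw [hum, hrinf]
    simp only [dif_pos hB]
    have h := (Finset.exists_mem_eq_inf' hB r).choose_spec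
    exact ⟨h.1, h.2⟩
  set gz : X → X := fun u => if u ∈ W then znear (um (Cl u)) else u with hgz
  have hgzZ : ∀ u ∈ Z ∪ W, gz u ∈ Z := by
    intro u hu
    rw [hgz]
    by_cases huW : u ∈ W
    · simp only [if_pos huW]
      exact (hznZ _).1
    · simp only [if_neg huW]
      rcases Finset.mem_union.mp hu with h | h
      · exact h
      · exact absurd h huW
  have hgzid : ∀ z ∈ Z, gz z = z := by
    intro z hz
    rw [hgz]
    simp only [if_neg (fun hc => hWZ z hc hz)]
  have hgzd : ∀ y ∈ W, d y (gz y) ≤ fdiam lam (Cl y) + rinf (Cl y) := by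
    intro y hy
    rw [hgz]
    simp only [if_pos hy]
    have hClne : (Cl y).Nonempty := ⟨y, hmemCl y hy⟩
    obtain ⟨humem, humr⟩ := humspec (Cl y) hClne
    obtain ⟨hzZ, hzr⟩ := hznZ (um (Cl y))
    calc d y (znear (um (Cl y))) ≤ d y (um (Cl y)) + d (um (Cl y)) (znear (um (Cl y))) :=
          hdt _ _ _
      _ = d y (um (Cl y)) + r (um (Cl y)) := by rw [← hzr]
      _ ≤ lam y (um (Cl y)) + r (um (Cl y)) := by
          linarith [hlexp y hy (um (Cl y)) (hClsubW y humem)]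
      _ ≤ fdiam lam (Cl y) + rinf (Cl y) := by
          have h1 := hfd_le y hy y (hmemCl y hy) (um (Cl y)) humem
          rw [humr]
          linarith
  have hgzd8 : ∀ y ∈ W, 8 * d y (gz y) ≤ t y := by
    intro y hy
    have h1 := hgzd y hy
    have h2 := ht8 y hy
    linarith
  have hgzinv : ∀ y y' : X, y ∈ W → y' ∈ W → Cl y = Cl y' → gz y = gz y' := by
    intro y y' hy hy' h
    rw [hgz]
    simp only [if_pos hy, if_pos hy', h]
  have htinv : ∀ y y' : X, Cl y = Cl y' → t y = t y' := by
    intro y y' h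
    rw [ht]
    simp only [h]
  have hClneW : ∀ u, u ∈ W ↔ (Cl u).Nonempty := by
    intro u
    constructor
    · intro hu
      exact ⟨u, hmemCl u hu⟩
    · rintro ⟨x, hx⟩
      by_contra hu
      rw [hClnW u hu] at hx
      exact absurd hx (Finset.notMem_empty x)
  have hsameW : ∀ u v, Cl u = Cl v → u ∈ W → v ∈ W :=
    fun u v h hu => (hClneW v).2 (h ▸ (hClneW u).1 hu)
  have hsameZ : ∀ u v, Cl u = Cl v → u ∉ W → v ∉ W :=
    fun u v h hu hv => hu ((hClneW u).2 (h.symm ▸ (hClneW v).1 hv))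
  set tA : X → ℝ := fun u => if u ∈ W then t u else 0 with htA
  have htAW : ∀ u ∈ W, tA u = t u := by
    intro u hu
    rw [htA]
    simp only [if_pos hu]
  have htAZ : ∀ u, u ∉ W → tA u = 0 := by
    intro u hu
    rw [htA]
    simp only [if_neg hu]
  have htAnn : ∀ u, 0 ≤ tA u := by
    intro u
    by_cases h : u ∈ W
    · rw [htAW u h]
      exact (htpos u).le
    · exact (htAZ u h).ge
  have htAinv : ∀ u v, Cl u = Cl v → tA u = tA v := by
    intro u v h
    by_cases hu : u ∈ W
    · rw [htAW u hu, htAW v (hsameW u v h hu)]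
      exact htinv u v h
    · rw [htAZ u hu, htAZ v (hsameZ u v h hu)]
  set mu : X → X → ℝ := fun u v => if Cl u = Cl v then (if u ∈ W then lam u v else 0)
    else max (tA u) (tA v) with hmu
  have hmu_sameW : ∀ u v, u ∈ W → Cl u = Cl v → mu u v = lam u v := by
    intro u v hu h
    rw [hmu]
    simp only [if_pos h, if_pos hu]
  have hmu_sameZ : ∀ u v, u ∉ W → Cl u = Cl v → mu u v = 0 := by
    intro u v hu h
    rw [hmu]
    simp only [if_pos h, if_neg hu]
  have hmu_diff : ∀ u v, Cl u ≠ Cl v → mu u v = max (tA u) (tA v) := by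
    intro u v h
    rw [hmu]
    simp only [if_neg h]
  have hmu_WZ : ∀ y ∈ W, ∀ v, v ∉ W → mu y v = t y := by
    intro y hy v hv
    have hne : Cl y ≠ Cl v := by
      intro h
      exact hsameZ v y h.symm hv hy
    rw [hmu_diff y v hne, htAW y hy, htAZ v hv, max_eq_left (htpos y).le]
  have hmu_ZW : ∀ v, v ∉ W → ∀ y ∈ W, mu v y = t y := by
    intro v hv y hy
    have hne : Cl v ≠ Cl y := by
      intro h
      exact hsameZ v y h hv hy
    rw [hmu_diff v y hne, htAW y hy, htAZ v hv, max_eq_right (htpos y).le]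
  have hmudiag : ∀ u, mu u u = 0 := by
    intro u
    by_cases h : u ∈ W
    · rw [hmu_sameW u u h rfl]
      exact hl0 u h
    · exact hmu_sameZ u u h rfl
  have hmusym : ∀ u v, mu u v = mu v u := by
    intro u v
    by_cases h : Cl u = Cl v
    · by_cases hu : u ∈ W
      · have hv : v ∈ W := hsameW u v h hu
        rw [hmu_sameW u v hu h, hmu_sameW v u hv h.symm]
        exact hlsym u hu v hv
      · have hv : v ∉ W := hsameZ u v h hu
        rw [hmu_sameZ u v hu h, hmu_sameZ v u hv h.symm]
    · rw [hmu_diff u v h, hmu_diff v u (fun hc => h hc.symm), max_comm]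
  have hmunn : ∀ u v, 0 ≤ mu u v := by
    intro u v
    by_cases h : Cl u = Cl v
    · by_cases hu : u ∈ W
      · rw [hmu_sameW u v hu h]
        exact hlnn u hu v (hsameW u v h hu)
      · rw [hmu_sameZ u v hu h]
    · rw [hmu_diff u v h]
      exact le_max_of_le_left (htAnn u)
  have hlam_le_t : ∀ u ∈ W, ∀ x ∈ W, Cl u = Cl x → lam u x ≤ t u := by
    intro u hu x hx h
    have hxCl : x ∈ Cl u := by
      rw [h]
      exact hmemCl x hx
    have h1 := hfd_le u hu u (hmemCl u hu) x hxCl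
    have h2 := htfd u hu
    have h3 := hfd_nn u hu
    linarith
  have hmust : ∀ u v x, mu u x ≤ max (mu u v) (mu v x) := by
    intro u v x
    by_cases hux : Cl u = Cl x
    · by_cases huv : Cl u = Cl v
      · have hvx : Cl v = Cl x := huv.symm.trans hux
        by_cases huW : u ∈ W
        · have hvW : v ∈ W := hsameW u v huv huW
          have hxW : x ∈ W := hsameW u x hux huW
          rw [hmu_sameW u x huW hux, hmu_sameW u v huW huv, hmu_sameW v x hvW hvx]
          exact hlst u huW v hvW x hxW
        · have hvW : v ∉ W := hsameZ u v huv huW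
          rw [hmu_sameZ u x huW hux, hmu_sameZ u v huW huv, hmu_sameZ v x hvW hvx]
          simp
      · have hmuv : mu u v = max (tA u) (tA v) := hmu_diff u v huv
        have hle : mu u x ≤ tA u := by
          by_cases huW : u ∈ W
          · rw [hmu_sameW u x huW hux, htAW u huW]
            exact hlam_le_t u huW x (hsameW u x hux huW) hux
          · rw [hmu_sameZ u x huW hux]
            exact htAnn u
        calc mu u x ≤ tA u := hle
          _ ≤ max (tA u) (tA v) := le_max_left _ _
          _ = mu u v := hmuv.symm
          _ ≤ max (mu u v) (mu v x) := le_max_left _ _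
    · have hmuux : mu u x = max (tA u) (tA x) := hmu_diff u x hux
      by_cases huv : Cl u = Cl v
      · have hvx : Cl v ≠ Cl x := fun hc => hux (huv.trans hc)
        rw [hmuux, htAinv u v huv, ← hmu_diff v x hvx]
        exact le_max_right _ _
      · by_cases hvx : Cl v = Cl x
        · rw [hmuux, hmu_diff u v huv, htAinv v x hvx]
          exact le_max_left _ _
        · rw [hmuux, hmu_diff u v huv, hmu_diff v x hvx]
          exact max_le (le_max_of_le_left (le_max_left _ _))
            (le_max_of_le_right (le_max_right _ _))
  have hmupow : ∀ u v, mu u v = 0 ∨ ∃ i : ℕ, mu u v = 2 ^ i := by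
    intro u v
    by_cases h : Cl u = Cl v
    · by_cases huW : u ∈ W
      · have hvW : v ∈ W := hsameW u v h huW
        rw [hmu_sameW u v huW h]
        by_cases huv : u = v
        · left
          rw [huv]
          exact hl0 v hvW
        · right
          exact hlpow u huW v hvW huv
      · left
        exact hmu_sameZ u v huW h
    · rw [hmu_diff u v h]
      by_cases huW : u ∈ W <;> by_cases hvW : v ∈ W
      · right
        obtain ⟨i, hi⟩ := pow2c_isPow (8 * (fdiam lam (Cl u) + rinf (Cl u)))
        obtain ⟨j, hj⟩ := pow2c_isPow (8 * (fdiam lam (Cl v) + rinf (Cl v)))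
        have hi' : t u = 2 ^ i := hi
        have hj' : t v = 2 ^ j := hj
        rw [htAW u huW, htAW v hvW, hi', hj', max_pow2]
        exact ⟨_, rfl⟩
      · right
        obtain ⟨i, hi⟩ := pow2c_isPow (8 * (fdiam lam (Cl u) + rinf (Cl u)))
        have hi' : t u = 2 ^ i := hi
        rw [htAW u huW, htAZ v hvW, max_eq_left (htpos u).le]
        exact ⟨i, hi'⟩
      · right
        obtain ⟨j, hj⟩ := pow2c_isPow (8 * (fdiam lam (Cl v) + rinf (Cl v)))
        have hj' : t v = 2 ^ j := hj
        rw [htAZ u huW, htAW v hvW, max_eq_right (htpos v).le]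
        exact ⟨j, hj'⟩
      · left
        rw [htAZ u huW, htAZ v hvW, max_self]
  -- unpack the embedding of Z
  obtain ⟨N, p, ρ, hp, hpsum, hHST, hρexpand, hρE⟩ := hemb
  have hZmem : ∀ {z : X}, z ∈ Z → z ∈ (↑Z : Set X) := fun hz => Finset.mem_coe.mpr hz
  have hρ0 : ∀ i, ∀ a ∈ Z, ρ i a a = 0 := fun i a ha => (hHST i).1 a (hZmem ha)
  have hρsym : ∀ i, ∀ a ∈ Z, ∀ b ∈ Z, ρ i a b = ρ i b a :=
    fun i a ha b hb => (hHST i).2.1 a (hZmem ha) b (hZmem hb)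
  have hρnn : ∀ i, ∀ a ∈ Z, ∀ b ∈ Z, 0 ≤ ρ i a b :=
    fun i a ha b hb => (hHST i).2.2.1 a (hZmem ha) b (hZmem hb)
  have hρne : ∀ i, ∀ a ∈ Z, ∀ b ∈ Z, a ≠ b → ρ i a b ≠ 0 :=
    fun i a ha b hb hab => (hHST i).2.2.2.1 a (hZmem ha) b (hZmem hb) hab
  have hρst : ∀ i, ∀ a ∈ Z, ∀ b ∈ Z, ∀ e ∈ Z, ρ i a e ≤ max (ρ i a b) (ρ i b e) :=
    fun i a ha b hb e he => (hHST i).2.2.2.2.2.1 a (hZmem ha) b (hZmem hb) e (hZmem he)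
  have hρpow : ∀ i, ∀ a ∈ Z, ∀ b ∈ Z, ρ i a b ≠ 0 → ∃ j : ℕ, ρ i a b = 2 ^ j :=
    fun i a ha b hb hne => (hHST i).2.2.2.2.2.2 a (hZmem ha) b (hZmem hb) hne
  have hρexp : ∀ i, ∀ a ∈ Z, ∀ b ∈ Z, d a b ≤ ρ i a b :=
    fun i a ha b hb => hρexpand i a (hZmem ha) b (hZmem hb)
  set sig : Fin N → X → X → ℝ := fun i u v => 4 * max (ρ i (gz u) (gz v)) (mu u v) with hsig
  -- membership helpers
  have hmemS : ∀ u : X, u ∈ (↑(Z ∪ W) : Set X) → u ∈ Z ∪ W := fun u hu => Finset.mem_coe.mp hu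
  have hZW : ∀ u, u ∈ Z ∪ W → u ∈ Z ∨ u ∈ W := fun u hu => Finset.mem_union.mp hu
  have hZnW : ∀ {u}, u ∈ Z → u ∉ W := fun {u} hu hc => hWZ u hc hu
  -- nonnegativity of sig components
  have hρgz : ∀ i, ∀ u ∈ Z ∪ W, ∀ v ∈ Z ∪ W, 0 ≤ ρ i (gz u) (gz v) :=
    fun i u hu v hv => hρnn i _ (hgzZ u hu) _ (hgzZ v hv)
  have hsignn : ∀ i, ∀ u ∈ Z ∪ W, ∀ v ∈ Z ∪ W, 0 ≤ sig i u v := by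
    intro i u hu v hv
    rw [hsig]
    have h1 := hmunn u v
    have h2 := le_max_right (ρ i (gz u) (gz v)) (mu u v)
    simp only
    linarith
  -- deterministic expansion bound
  have hexpand : ∀ i, ∀ u ∈ Z ∪ W, ∀ v ∈ Z ∪ W, d u v ≤ sig i u v := by
    intro i u hu v hv
    rw [hsig]
    simp only
    set M := max (ρ i (gz u) (gz v)) (mu u v) with hM
    have hMρ : ρ i (gz u) (gz v) ≤ M := le_max_left _ _
    have hMμ : mu u v ≤ M := le_max_right _ _
    have hMnn : 0 ≤ M := le_trans (hmunn u v) hMμ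
    rcases hZW u hu with huZ | huW <;> rcases hZW v hv with hvZ | hvW
    · -- both in Z
      have he := hρexp i u huZ v hvZ
      rw [hgzid u huZ, hgzid v hvZ] at hMρ
      linarith
    · -- u ∈ Z, v ∈ W
      have hmuv : mu u v = t v := hmu_ZW u (hZnW huZ) v hvW
      have h1 : d u v ≤ d u (gz v) + d v (gz v) := by
        have := hdt u (gz v) v
        rw [hds (gz v) v] at this
        linarith
      have h2 : d u (gz v) ≤ ρ i (gz u) (gz v) := by
        rw [hgzid u huZ]
        exact hρexp i u huZ _ (hgzZ v hv)
      have h3 := hgzd8 v hvW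
      have h4 : t v ≤ M := hmuv ▸ hMμ
      linarith
    · -- u ∈ W, v ∈ Z
      have hmuv : mu u v = t u := hmu_WZ u huW v (hZnW hvZ)
      have h1 : d u v ≤ d u (gz u) + d (gz u) v := hdt u (gz u) v
      have h2 : d (gz u) v ≤ ρ i (gz u) (gz v) := by
        rw [hgzid v hvZ]
        exact hρexp i _ (hgzZ u hu) v hvZ
      have h3 := hgzd8 u huW
      have h4 : t u ≤ M := hmuv ▸ hMμ
      linarith
    · -- both in W
      by_cases hcl : Cl u = Cl v
      · have hmuv : mu u v = lam u v := hmu_sameW u v huW hcl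
        have := hlexp u huW v hvW
        have h4 : lam u v ≤ M := hmuv ▸ hMμ
        linarith
      · have hmuv : mu u v = max (tA u) (tA v) := hmu_diff u v hcl
        have h1 : d u v ≤ d u (gz u) + d (gz u) (gz v) + d (gz v) v := by
          have ha := hdt u (gz u) v
          have hb := hdt (gz u) (gz v) v
          have hcx := hds (gz v) v
          linarith
        have h2 : d (gz u) (gz v) ≤ ρ i (gz u) (gz v) := hρexp i _ (hgzZ u hu) _ (hgzZ v hv)
        have h3 := hgzd8 u huW
        have h3' := hgzd8 v hvW
        have h5 : t u ≤ M := by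
          refine le_trans ?_ hMμ
          rw [hmuv, ← htAW u huW]
          exact le_max_left _ _
        have h5' : t v ≤ M := by
          refine le_trans ?_ hMμ
          rw [hmuv, ← htAW v hvW]
          exact le_max_right _ _
        have hdvg : d (gz v) v = d v (gz v) := hds _ _
        linarith
  -- the deterministic part of the expectation bound
  have hkey : ∀ u ∈ Z ∪ W, ∀ v ∈ Z ∪ W,
      c * d (gz u) (gz v) + mu u v ≤ 128 * (G * c) * d u v := by
    intro u hu v hv
    have hc0 : (0:ℝ) ≤ c := by linarith
    have hG0 : (0:ℝ) ≤ G := by linarith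
    rcases hZW u hu with huZ | huW <;> rcases hZW v hv with hvZ | hvW
    · -- Z-Z
      rw [hgzid u huZ, hgzid v hvZ,
        hmu_sameZ u v (hZnW huZ) (by rw [hClnW u (hZnW huZ), hClnW v (hZnW hvZ)])]
      have hd' := hdn u v
      have f1 : c * d u v ≤ G * c * d u v := by
        have h := mul_nonneg (mul_nonneg (by linarith : (0:ℝ) ≤ G - 1) hc0) hd'
        nlinarith
      have f2 : (0:ℝ) ≤ G * c * d u v := by positivity
      linarith
    · -- u ∈ Z, v ∈ W
      rw [hgzid u huZ, hmu_ZW u (hZnW huZ) v hvW]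
      have h1 : d u (gz v) ≤ d u v + d v (gz v) := hdt u v (gz v)
      have h2 := hgzd8 v hvW
      have h3 : t v ≤ 64 * r v := ht64 v hvW v (hmemCl v hvW)
      have h4 : r v ≤ d v u := hrle v u huZ
      have h5 : d v u = d u v := hds v u
      have hd' := hdn u v
      have f1 : d u (gz v) ≤ 9 * d u v := by linarith
      have f2 : c * d u (gz v) ≤ c * (9 * d u v) := mul_le_mul_of_nonneg_left f1 hc0
      have f3 : 64 * d u v ≤ 64 * (c * d u v) := by
        have h := mul_nonneg (by linarith : (0:ℝ) ≤ c - 1) hd'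
        nlinarith
      have f4 : c * d u v ≤ G * c * d u v := by
        have h := mul_nonneg (mul_nonneg (by linarith : (0:ℝ) ≤ G - 1) hc0) hd'
        nlinarith
      have f5 : (0:ℝ) ≤ G * c * d u v := by positivity
      nlinarith
    · -- u ∈ W, v ∈ Z
      rw [hgzid v hvZ, hmu_WZ u huW v (hZnW hvZ)]
      have h1 : d (gz u) v ≤ d (gz u) u + d u v := hdt (gz u) u v
      have h1' : d (gz u) u = d u (gz u) := hds _ _
      have h2 := hgzd8 u huW
      have h3 : t u ≤ 64 * r u := ht64 u huW u (hmemCl u huW)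
      have h4 : r u ≤ d u v := hrle u v hvZ
      have hd' := hdn u v
      have f1 : d (gz u) v ≤ 9 * d u v := by linarith
      have f2 : c * d (gz u) v ≤ c * (9 * d u v) := mul_le_mul_of_nonneg_left f1 hc0
      have f3 : 64 * d u v ≤ 64 * (c * d u v) := by
        have h := mul_nonneg (by linarith : (0:ℝ) ≤ c - 1) hd'
        nlinarith
      have f4 : c * d u v ≤ G * c * d u v := by
        have h := mul_nonneg (mul_nonneg (by linarith : (0:ℝ) ≤ G - 1) hc0) hd'
        nlinarith
      have f5 : (0:ℝ) ≤ G * c * d u v := by positivity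
      nlinarith
    · -- both in W
      by_cases hcl : Cl u = Cl v
      · rw [hmu_sameW u v huW hcl, hgzinv u v huW hvW hcl, hd0]
        have h1 := hldist u huW v hvW
        have hd' := hdn u v
        have f1 : G * d u v ≤ G * c * d u v := by
          have h := mul_nonneg (mul_nonneg hG0 (by linarith : (0:ℝ) ≤ c - 1)) hd'
          nlinarith
        have f2 : (0:ℝ) ≤ G * c * d u v := by positivity
        nlinarith
      · rw [hmu_diff u v hcl]
        have htu : t u ≤ 96 * lam u v := htcross u huW v hvW hcl
        have htv : t v ≤ 96 * lam u v := by
          have h := htcross v hvW u huW (fun hcx => hcl hcx.symm)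
          rw [hlsym v hvW u huW] at h
          exact h
        have hlG : lam u v ≤ G * d u v := hldist u huW v hvW
        have hd' := hdn u v
        have hGd : (0:ℝ) ≤ G * d u v := by positivity
        have hmax : max (tA u) (tA v) ≤ 96 * (G * d u v) := by
          rw [htAW u huW, htAW v hvW]
          exact max_le (by linarith) (by linarith)
        have h1 : d (gz u) (gz v) ≤ d (gz u) u + d u v + d v (gz v) := by
          have ha := hdt (gz u) u (gz v)
          have hb := hdt u v (gz v)
          linarith
        have h1' : d (gz u) u = d u (gz u) := hds _ _
        have h2 := hgzd8 u huW
        have h2' := hgzd8 v hvW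
        have f1 : d (gz u) (gz v) ≤ 24 * (G * d u v) + d u v := by linarith
        have f2 : c * d (gz u) (gz v) ≤ c * (24 * (G * d u v) + d u v) :=
          mul_le_mul_of_nonneg_left f1 hc0
        have f3 : G * d u v ≤ G * c * d u v := by
          have h := mul_nonneg (mul_nonneg hG0 (by linarith : (0:ℝ) ≤ c - 1)) hd'
          nlinarith
        have f4 : c * d u v ≤ G * c * d u v := by
          have h := mul_nonneg (mul_nonneg (by linarith : (0:ℝ) ≤ G - 1) hc0) hd'
          nlinarith
        have f5 : (0:ℝ) ≤ G * c * d u v := by positivity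
        nlinarith
  -- assemble
  refine ⟨N, p, sig, hp, hpsum, ?_, ?_, ?_⟩
  · -- HST metric conditions
    intro i
    refine ⟨?_, ?_, ?_, ?_, ?_, ?_, ?_⟩
    · intro x hx
      have hx' := hmemS x hx
      rw [hsig]
      simp only
      rw [hρ0 i _ (hgzZ x hx'), hmudiag x, max_self, mul_zero]
    · intro x hx y hy
      have hx' := hmemS x hx
      have hy' := hmemS y hy
      rw [hsig]
      simp only
      rw [hρsym i _ (hgzZ x hx') _ (hgzZ y hy'), hmusym x y]
    · intro x hx y hy
      exact hsignn i x (hmemS x hx) y (hmemS y hy)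
    · intro x hx y hy hxy
      have hx' := hmemS x hx
      have hy' := hmemS y hy
      have hpos : 0 < sig i x y := by
        rw [hsig]
        simp only
        rcases hZW x hx' with hxZ | hxW <;> rcases hZW y hy' with hyZ | hyW
        · have h1 : ρ i (gz x) (gz y) ≠ 0 := by
            rw [hgzid x hxZ, hgzid y hyZ]
            exact hρne i x hxZ y hyZ hxy
          have h2 : 0 ≤ ρ i (gz x) (gz y) := hρgz i x hx' y hy'
          have h3 : 0 < ρ i (gz x) (gz y) := lt_of_le_of_ne h2 (Ne.symm h1)
          have := le_max_left (ρ i (gz x) (gz y)) (mu x y)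
          linarith
        · have h1 : mu x y = t y := hmu_ZW x (hZnW hxZ) y hyW
          have h2 := htpos y
          have := le_max_right (ρ i (gz x) (gz y)) (mu x y)
          linarith [h1 ▸ h2]
        · have h1 : mu x y = t x := hmu_WZ x hxW y (hZnW hyZ)
          have h2 := htpos x
          have := le_max_right (ρ i (gz x) (gz y)) (mu x y)
          linarith [h1 ▸ h2]
        · have hmpos : 0 < mu x y := by
            by_cases hcl : Cl x = Cl y
            · rw [hmu_sameW x y hxW hcl]
              have := hlexp x hxW y hyW
              have := hd1 x y hxy
              linarith
            · rw [hmu_diff x y hcl, htAW x hxW]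
              exact lt_of_lt_of_le (htpos x) (le_max_left _ _)
          have := le_max_right (ρ i (gz x) (gz y)) (mu x y)
          linarith
      exact ne_of_gt hpos
    · -- plain triangle from strong triangle and nonnegativity
      intro x hx y hy e he
      have h1 : sig i x e ≤ max (sig i x y) (sig i y e) := by
        rw [hsig]
        simp only
        rw [mul4_max]
        apply mul_le_mul_of_nonneg_left _ (by norm_num : (0:ℝ) ≤ 4)
        apply max_le
        · refine le_trans (hρst i _ (hgzZ x (hmemS x hx)) _ (hgzZ y (hmemS y hy)) _
            (hgzZ e (hmemS e he))) ?_
          exact max_le_max (le_max_left _ _) (le_max_left _ _)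
        · refine le_trans (hmust x y e) ?_
          exact max_le_max (le_max_right _ _) (le_max_right _ _)
      have h2 := hsignn i x (hmemS x hx) y (hmemS y hy)
      have h3 := hsignn i y (hmemS y hy) e (hmemS e he)
      rcases max_cases (sig i x y) (sig i y e) with ⟨he1, -⟩ | ⟨he1, -⟩ <;> rw [he1] at h1 <;>
        linarith
    · intro x hx y hy e he
      rw [hsig]
      simp only
      rw [mul4_max]
      apply mul_le_mul_of_nonneg_left _ (by norm_num : (0:ℝ) ≤ 4)
      apply max_le
      · refine le_trans (hρst i _ (hgzZ x (hmemS x hx)) _ (hgzZ y (hmemS y hy)) _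
          (hgzZ e (hmemS e he))) ?_
        exact max_le_max (le_max_left _ _) (le_max_left _ _)
      · refine le_trans (hmust x y e) ?_
        exact max_le_max (le_max_right _ _) (le_max_right _ _)
    · intro x hx y hy hne
      have hx' := hmemS x hx
      have hy' := hmemS y hy
      rcases max_choice (ρ i (gz x) (gz y)) (mu x y) with h | h
      · have hval : sig i x y = 4 * ρ i (gz x) (gz y) := by rw [hsig]; simp only; rw [h]
        rw [hval] at hne ⊢
        have hρne0 : ρ i (gz x) (gz y) ≠ 0 := fun hc => hne (by rw [hc]; ring)
        obtain ⟨j, hj⟩ := hρpow i _ (hgzZ x hx') _ (hgzZ y hy') hρne0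
        exact ⟨j + 2, by rw [hj]; ring⟩
      · have hval : sig i x y = 4 * mu x y := by rw [hsig]; simp only; rw [h]
        rw [hval] at hne ⊢
        rcases hmupow x y with h0 | ⟨j, hj⟩
        · exact absurd (by rw [h0]; ring) hne
        · exact ⟨j + 2, by rw [hj]; ring⟩
  · -- expansion
    intro i x hx y hy
    exact hexpand i x (hmemS x hx) y (hmemS y hy)
  · -- expectation
    intro x hx y hy
    have hx' := hmemS x hx
    have hy' := hmemS y hy
    have hstep : ∀ i, p i * sig i x y ≤ p i * (4 * ρ i (gz x) (gz y) + 4 * mu x y) := by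
      intro i
      apply mul_le_mul_of_nonneg_left _ (hp i)
      rw [hsig]
      simp only
      have h1 := hρgz i x hx' y hy'
      have h2 := hmunn x y
      have h3 : max (ρ i (gz x) (gz y)) (mu x y) ≤ ρ i (gz x) (gz y) + mu x y :=
        max_le (by linarith) (by linarith)
      linarith
    calc ∑ i, p i * sig i x y ≤ ∑ i, p i * (4 * ρ i (gz x) (gz y) + 4 * mu x y) :=
          Finset.sum_le_sum (fun i _ => hstep i)
      _ = 4 * (∑ i, p i * ρ i (gz x) (gz y)) + 4 * mu x y * (∑ i, p i) := by
          rw [Finset.mul_sum, Finset.mul_sum, ← Finset.sum_add_distrib]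
          apply Finset.sum_congr rfl
          intro i _
          ring
      _ ≤ 4 * (c * d (gz x) (gz y)) + 4 * mu x y * 1 := by
          have hE := hρE (gz x) (hZmem (hgzZ x hx')) (gz y) (hZmem (hgzZ y hy'))
          rw [hpsum]
          have := hmunn x y
          linarith
      _ = 4 * (c * d (gz x) (gz y) + mu x y) := by ring
      _ ≤ 4 * (128 * (G * c) * d x y) := by
          have := hkey x hx' y hy'
          linarith
      _ = 512 * G * c * d x y := by ring





/-! ### assembling the main theorem -/

lemma prob_mono {S : Set X} {d : X → X → ℝ} {c c' : ℝ}
    (hd : IsMetricGE1 d) (h : ProbHSTEmbedding S d c) (hcc : c ≤ c') :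
    ProbHSTEmbedding S d c' := by
  obtain ⟨n, p, ρ, hp, hs, hh, he, hE⟩ := h
  exact ⟨n, p, ρ, hp, hs, hh, he, fun u hu v hv => le_trans (hE u hu v hv)
    (mul_le_mul_of_nonneg_right hcc (IsMetricGE1.nonneg hd u v))⟩

lemma prob_of_det (S : Set X) (d : X → X → ℝ) (c : ℝ) (ρ : X → X → ℝ)
    (h1 : IsHSTMetricOn S ρ) (h2 : ∀ u ∈ S, ∀ v ∈ S, d u v ≤ ρ u v)
    (h3 : ∀ u ∈ S, ∀ v ∈ S, ρ u v ≤ c * d u v) : ProbHSTEmbedding S d c := by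
  refine ⟨1, fun _ => 1, fun _ => ρ, fun _ => zero_le_one, by simp, fun _ => h1, fun _ => h2,
    fun u hu v hv => ?_⟩
  simpa using h3 u hu v hv

lemma ultra_isHST {d : X → X → ℝ} (hd : IsMetricGE1 d) {τ L : ℕ} {Y W : Finset X}
    {lam : X → X → ℝ} (hU : UltraGood d τ L Y W lam) : IsHSTMetricOn (↑W : Set X) lam := by
  obtain ⟨hd0, hds, hdt, hd1⟩ := hd
  obtain ⟨hsub, hcard, h0, hsym, hexp, hst, hpow, hdist, hcap⟩ := hU
  have hm : ∀ {u : X}, u ∈ (↑W : Set X) → u ∈ W := fun {u} hu => Finset.mem_coe.mp hu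
  have hnn : ∀ u ∈ W, ∀ v ∈ W, 0 ≤ lam u v := fun u hu v hv =>
    le_trans (IsMetricGE1.nonneg ⟨hd0, hds, hdt, hd1⟩ u v) (hexp u hu v hv)
  have hposne : ∀ u ∈ W, ∀ v ∈ W, u ≠ v → 0 < lam u v := by
    intro u hu v hv hne
    have := hd1 u v hne
    have := hexp u hu v hv
    linarith
  refine ⟨fun x hx => h0 x (hm hx), fun x hx y hy => hsym x (hm hx) y (hm hy),
    fun x hx y hy => hnn x (hm hx) y (hm hy), ?_, ?_, ?_, ?_⟩
  · intro x hx y hy hne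
    exact ne_of_gt (hposne x (hm hx) y (hm hy) hne)
  · intro x hx y hy e he
    have h1 := hst x (hm hx) y (hm hy) e (hm he)
    have h2 := hnn x (hm hx) y (hm hy)
    have h3 := hnn y (hm hy) e (hm he)
    rcases max_cases (lam x y) (lam y e) with ⟨hc1, -⟩ | ⟨hc1, -⟩ <;> rw [hc1] at h1 <;> linarith
  · intro x hx y hy e he
    exact hst x (hm hx) y (hm hy) e (hm he)
  · intro x hx y hy hne0
    have hxy : x ≠ y := by
      intro h
      rw [h] at hne0
      exact hne0 (h0 y (hm hy))
    exact hpow x (hm hx) y (hm hy) hxy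

lemma master {X : Type} [Fintype X] [DecidableEq X] (d : X → X → ℝ) (hd : IsMetricGE1 d)
    (c : ℝ) (hc : 1 ≤ c) (K : Finset X) (hemb : ProbHSTEmbedding (↑(Kᶜ) : Set X) d c)
    (τ L : ℕ) (hτ : 1 ≤ τ) (hL : 1 ≤ L) (hKL : K.card < 2 ^ L) :
    ∃ S : Finset X, τ * (Sᶜ : Finset X).card ≤ K.card * Nat.log 2 K.card ∧
      ProbHSTEmbedding (↑S : Set X) d (512 * ((64 * τ * L : ℕ) : ℝ) * c) := by
  obtain ⟨W, lam, hU⟩ := ultra_approx d hd τ L hτ K.card K le_rfl hKL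
  obtain ⟨hsub, hcard, h0, hsym, hexp, hst, hpow, hdist, hcap⟩ := hU
  have hG1 : (1:ℝ) ≤ ((64 * τ * L : ℕ) : ℝ) := by
    have h1 : 1 ≤ 64 * τ * L := Nat.one_le_iff_ne_zero.mpr (by positivity)
    exact_mod_cast h1
  rcases Finset.eq_empty_or_nonempty (Kᶜ : Finset X) with hKc | hKc
  · -- K is the whole space : use the deterministic ultrametric
    have hKall : ∀ a : X, a ∈ K := by
      intro a
      by_contra h
      have h2 : a ∈ (Kᶜ : Finset X) := Finset.mem_compl.mpr h
      rw [hKc] at h2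
      exact absurd h2 (Finset.notMem_empty a)
    refine ⟨W, ?_, ?_⟩
    · have hSc : (Wᶜ : Finset X) = K \ W := by
        ext a
        simp only [Finset.mem_compl, Finset.mem_sdiff]
        exact ⟨fun h => ⟨hKall a, h⟩, fun h => h.2⟩
      rw [hSc]
      exact hcard
    · apply prob_of_det _ _ _ lam
        (ultra_isHST hd ⟨hsub, hcard, h0, hsym, hexp, hst, hpow, hdist, hcap⟩)
        (fun u hu v hv => hexp u (Finset.mem_coe.mp hu) v (Finset.mem_coe.mp hv))
      intro u hu v hv
      have hdnn := IsMetricGE1.nonneg hd u v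
      calc lam u v ≤ ((64*τ*L:ℕ):ℝ) * d u v :=
            hdist u (Finset.mem_coe.mp hu) v (Finset.mem_coe.mp hv)
        _ ≤ 512 * ((64*τ*L:ℕ):ℝ) * c * d u v := by
            nlinarith [mul_nonneg (mul_nonneg (by linarith : (0:ℝ) ≤ 512*c - 1)
              (by linarith : (0:ℝ) ≤ ((64*τ*L:ℕ):ℝ))) hdnn]
  · refine ⟨Kᶜ ∪ W, ?_, ?_⟩
    · have hSc : ((Kᶜ ∪ W)ᶜ : Finset X) = K \ W := by
        ext a
        simp only [Finset.mem_compl, Finset.mem_union, Finset.mem_sdiff, not_or, not_not]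
      rw [hSc]
      exact hcard
    · exact glue d hd c hc Kᶜ hKc hemb W
        (fun y hy hcY => (Finset.mem_compl.mp hcY) (hsub hy)) lam _ hG1
        h0 hsym hexp hst hpow hdist

end OutlierHST


open OutlierHST in
/-- Main outlier-embedding theorem (Theorem 1): if `(X,d)` admits a probabilistic
`(k,c)`-outlier embedding into 2-HSTs, then one can remove `O((k/ε)·log²k)` points so
that the rest embeds probabilistically into 2-HSTs with distortion `(32+ε)·c`. -/
theorem outlier_embedding_into_HSTs :
    ∃ C : ℝ, 0 < C ∧
      ∀ (X : Type) [Fintype X] [DecidableEq X] (d : X → X → ℝ) (k : ℕ) (c ε : ℝ),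
        IsMetricGE1 d → 1 ≤ k → 1 ≤ c → 0 < ε →
        (∃ K : Finset X, K.card ≤ k ∧ ProbHSTEmbedding (↑(Kᶜ) : Set X) d c) →
        ∃ S : Finset X,
          (((Sᶜ : Finset X).card : ℝ) ≤ C * ((k : ℝ) / ε) * (1 + Real.log k) ^ 2) ∧
          ProbHSTEmbedding (↑S : Set X) d ((32 + ε) * c) := by
  refine ⟨2^18, by norm_num, ?_⟩
  intro X _ _ d k c ε hd hk hc hε hKex
  obtain ⟨K, hKk, hemb⟩ := hKex
  have hlogk0 : 0 ≤ Real.log k := Real.log_nonneg (by exact_mod_cast hk)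
  have hE1 : (1:ℝ) ≤ 1 + Real.log k := by linarith
  set L : ℕ := Nat.log 2 k + 1 with hLdef
  have hL1 : 1 ≤ L := by omega
  have hL0 : (1:ℝ) ≤ (L:ℝ) := by exact_mod_cast hL1
  have hLr : (L:ℝ) ≤ 2 * (1 + Real.log k) := by
    have h1 : ((Nat.log 2 k : ℕ):ℝ) ≤ Real.logb 2 k := Real.natLog_le_logb k 2
    have hlog2 : (1:ℝ)/2 ≤ Real.log 2 := by
      have := Real.log_two_gt_d9
      linarith
    have hlog2pos : (0:ℝ) < Real.log 2 := by linarith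
    have h2 : Real.logb 2 k ≤ 2 * Real.log k := by
      rw [Real.logb, div_le_iff₀ hlog2pos]
      nlinarith
    rw [hLdef]
    push_cast
    linarith
  have hKL : K.card < 2 ^ L := by
    have h1 : k < 2 ^ L := Nat.lt_pow_succ_log_self (by norm_num) k
    exact lt_of_le_of_lt hKk h1
  have hk0 : (0:ℝ) ≤ (k:ℝ) := Nat.cast_nonneg k
  by_cases hreg : ε ≤ 2^15 * (L:ℝ)
  · -- small ε regime : keep Kᶜ itself
    refine ⟨Kᶜ, ?_, prob_mono hd hemb ?_⟩
    · rw [compl_compl]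
      have hck : ((K.card : ℕ):ℝ) ≤ (k:ℝ) := by exact_mod_cast hKk
      have hElog : 1 + Real.log k ≤ (1 + Real.log k)^2 := by nlinarith
      have h2 : ε ≤ 2^18 * (1+Real.log k)^2 := by nlinarith
      have heq : (2:ℝ)^18 * ((k:ℝ)/ε) * (1+Real.log k)^2
          = (2^18 * (k:ℝ) * (1+Real.log k)^2) / ε := by ring
      rw [heq, le_div_iff₀ hε]
      have f1 : (K.card:ℝ) * ε ≤ (k:ℝ) * ε := mul_le_mul_of_nonneg_right hck hε.le
      have f2 : (k:ℝ) * ε ≤ (k:ℝ) * (2^18 * (1+Real.log k)^2) :=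
        mul_le_mul_of_nonneg_left h2 hk0
      nlinarith
    · nlinarith [mul_nonneg (by linarith : (0:ℝ) ≤ 31 + ε) (by linarith : (0:ℝ) ≤ c)]
  · push_neg at hreg
    have hden : (0:ℝ) < 2^15 * (L:ℝ) := by nlinarith
    set τ : ℕ := ⌊ε / (2^15 * (L:ℝ))⌋₊ with hτdef
    have hx1 : (1:ℝ) ≤ ε / (2^15 * L) := (one_le_div hden).mpr hreg.le
    have hτ1 : 1 ≤ τ := by
      rw [hτdef]
      exact Nat.le_floor (by exact_mod_cast hx1)
    have hτR1 : (1:ℝ) ≤ (τ:ℝ) := by exact_mod_cast hτ1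
    have hτle : (τ:ℝ) ≤ ε / (2^15 * L) := Nat.floor_le (by positivity)
    have hτlow : ε / (2^15 * L) ≤ 2 * τ := by
      have h1 : ε / (2^15*L) - 1 < (τ:ℝ) := Nat.sub_one_lt_floor _
      rcases le_total (ε / (2^15 * L)) 2 with h | h
      · linarith
      · linarith
    obtain ⟨S, hcard, hembS⟩ := master d hd c hc K hemb τ L hτ1 hL1 hKL
    refine ⟨S, ?_, prob_mono hd hembS ?_⟩
    · have h1 : K.card * Nat.log 2 K.card ≤ k * L := by
        have ha : Nat.log 2 K.card ≤ L := le_trans (Nat.log_mono_right hKk) (by omega)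
        exact Nat.mul_le_mul hKk ha
      have h2 : (τ:ℝ) * ((Sᶜ : Finset X).card : ℝ) ≤ (k:ℝ) * L := by
        exact_mod_cast le_trans hcard h1
      have h3 : ε ≤ 2^16 * τ * L := by
        rw [div_le_iff₀ hden] at hτlow
        linarith
      have hLnn : (0:ℝ) ≤ (L:ℝ) := Nat.cast_nonneg _
      have hLsq : (L:ℝ)^2 ≤ 4 * (1+Real.log k)^2 := by
        nlinarith [mul_le_mul hLr hLr hLnn (by linarith : (0:ℝ) ≤ 2*(1+Real.log k))]
      have heq : (2:ℝ)^18 * ((k:ℝ)/ε) * (1+Real.log k)^2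
          = (2^18 * (k:ℝ) * (1+Real.log k)^2) / ε := by ring
      rw [heq, le_div_iff₀ hε]
      have hSnn : (0:ℝ) ≤ ((Sᶜ : Finset X).card : ℝ) := Nat.cast_nonneg _
      have f1 : ((Sᶜ : Finset X).card:ℝ) * ε ≤ ((Sᶜ : Finset X).card:ℝ) * (2^16 * τ * L) :=
        mul_le_mul_of_nonneg_left h3 hSnn
      have f2 : ((Sᶜ : Finset X).card:ℝ) * (2^16 * τ * L)
          = 2^16 * (L:ℝ) * ((τ:ℝ) * ((Sᶜ : Finset X).card:ℝ)) := by ring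
      have f3 : 2^16 * (L:ℝ) * ((τ:ℝ) * ((Sᶜ : Finset X).card:ℝ))
          ≤ 2^16 * (L:ℝ) * ((k:ℝ) * L) := by
        apply mul_le_mul_of_nonneg_left h2
        positivity
      have f4 : 2^16 * (L:ℝ) * ((k:ℝ) * L) = 2^16 * (k:ℝ) * (L:ℝ)^2 := by ring
      have f5 : 2^16 * (k:ℝ) * (L:ℝ)^2 ≤ 2^16 * (k:ℝ) * (4 * (1+Real.log k)^2) := by
        apply mul_le_mul_of_nonneg_left hLsq
        positivity
      nlinarith
    · have h2 : (τ:ℝ) * (2^15 * L) ≤ ε := by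
        rw [← le_div_iff₀ hden]
        exact hτle
      have h1 : 512 * ((64 * τ * L : ℕ):ℝ) ≤ ε := by
        calc 512 * ((64 * τ * L : ℕ):ℝ) = (τ:ℝ) * (2^15 * L) := by push_cast; ring
          _ ≤ ε := h2
      apply mul_le_mul_of_nonneg_right _ (by linarith : (0:ℝ) ≤ c)
      linarith
end
end

section
/- Let Z₁ and Z₂ be finite sets with Z₁ ∩ Z₂ = {u}, let ρ₁ be a 2-HST metric on Z₁, and let ρ₂ be a 2-HST metric on Z₂. Define ρ on (Z₁ ∪ Z₂) × (Z₁ ∪ Z₂) by: ρ(x,y) = ρ₁(x,y) if x,y ∈ Z₁; ρ(x,y) = ρ₂(x,y) if x,y ∈ Z₂; and ρ(x,y) = ρ(y,x) = max(ρ₁(x,u), ρ₂(u,y)) if x ∈ Z₁ ∖ {u} and y ∈ Z₂ ∖ {u}. Then ρ is a 2-HST metric on Z₁ ∪ Z₂. In particular, ρ restricts to ρ₁ on Z₁ × Z₁ and to ρ₂ on Z₂ × Z₂, and ρ(x,y) ≥ max(ρ₁(x,u), ρ₂(u,y)) for all x ∈ Z₁ and y ∈ Z₂; that is, 2-HST metrics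 admit a perfect merge function. -/
/-- 2-HST metrics admit a perfect merge: if `Z₁ ∩ Z₂ = {u}`, `ρ₁` is a 2-HST metric on
`Z₁`, `ρ₂` is a 2-HST metric on `Z₂`, and `ρ` agrees with `ρ₁` on `Z₁`, with `ρ₂` on
`Z₂`, and on cross pairs `x ∈ Z₁ ∖ {u}`, `y ∈ Z₂ ∖ {u}` equals
`max (ρ₁ x u) (ρ₂ u y)` (symmetrically), then `ρ` is a 2-HST metric on `Z₁ ∪ Z₂` and
every cross pair gets distance at least `max (ρ₁ x u) (ρ₂ u y)`. -/
theorem HST_perfect_merge {X : Type*} (Z₁ Z₂ : Set X) (u : X)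
    (hfin₁ : Z₁.Finite) (hfin₂ : Z₂.Finite)
    (hu : Z₁ ∩ Z₂ = {u})
    (ρ₁ ρ₂ ρ : X → X → ℝ)
    (h₁ : IsHSTMetricOn Z₁ ρ₁) (h₂ : IsHSTMetricOn Z₂ ρ₂)
    (hρ₁ : ∀ x ∈ Z₁, ∀ y ∈ Z₁, ρ x y = ρ₁ x y)
    (hρ₂ : ∀ x ∈ Z₂, ∀ y ∈ Z₂, ρ x y = ρ₂ x y)
    (hcross : ∀ x ∈ Z₁, ∀ y ∈ Z₂, x ≠ u → y ≠ u →
      ρ x y = max (ρ₁ x u) (ρ₂ u y) ∧ ρ y x = max (ρ₁ x u) (ρ₂ u y)) :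
    IsHSTMetricOn (Z₁ ∪ Z₂) ρ ∧
    (∀ x ∈ Z₁, ∀ y ∈ Z₂, max (ρ₁ x u) (ρ₂ u y) ≤ ρ x y) := by
  obtain ⟨h1refl, h1symm, h1nn, h1ne, h1tri, h1ult, h1pow⟩ := h₁
  obtain ⟨h2refl, h2symm, h2nn, h2ne, h2tri, h2ult, h2pow⟩ := h₂
  have humem : u ∈ Z₁ ∩ Z₂ := by rw [hu]; exact rfl
  have hu₁ : u ∈ Z₁ := humem.1
  have hu₂ : u ∈ Z₂ := humem.2
  -- the cross formula holds for ALL x ∈ Z₁, y ∈ Z₂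
  have hc : ∀ x ∈ Z₁, ∀ y ∈ Z₂, ρ x y = max (ρ₁ x u) (ρ₂ u y) ∧
      ρ y x = max (ρ₁ x u) (ρ₂ u y) := by
    intro x hx y hy
    by_cases hxu : x = u
    · subst hxu
      rw [h1refl x hu₁, max_eq_right (h2nn x hu₂ y hy), hρ₂ x hu₂ y hy,
        hρ₂ y hy x hu₂, h2symm y hy x hu₂]
      exact ⟨rfl, rfl⟩
    · by_cases hyu : y = u
      · subst hyu
        rw [h2refl y hu₂, max_eq_left (h1nn x hx y hu₁), hρ₁ x hx y hu₁,
          hρ₁ y hu₁ x hx, h1symm y hu₁ x hx]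
        exact ⟨rfl, rfl⟩
      · exact hcross x hx y hy hxu hyu
  -- within-side ultrametric through u
  have h1u : ∀ x ∈ Z₁, ∀ z ∈ Z₁, ρ₁ x z ≤ max (ρ₁ x u) (ρ₁ z u) := by
    intro x hx z hz
    have := h1ult x hx u hu₁ z hz
    rwa [h1symm u hu₁ z hz] at this
  have h2u : ∀ x ∈ Z₂, ∀ z ∈ Z₂, ρ₂ x z ≤ max (ρ₂ u x) (ρ₂ u z) := by
    intro x hx z hz
    have := h2ult x hx u hu₂ z hz
    rwa [h2symm x hx u hu₂] at this
  -- strong triangle inequality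
  have hULT : ∀ x ∈ Z₁ ∪ Z₂, ∀ y ∈ Z₁ ∪ Z₂, ∀ z ∈ Z₁ ∪ Z₂,
      ρ x z ≤ max (ρ x y) (ρ y z) := by
    rintro x (hx | hx) y (hy | hy) z (hz | hz)
    · rw [hρ₁ x hx z hz, hρ₁ x hx y hy, hρ₁ y hy z hz]
      exact h1ult x hx y hy z hz
    · -- x,y ∈ Z₁, z ∈ Z₂
      rw [(hc x hx z hz).1, hρ₁ x hx y hy, (hc y hy z hz).1]
      apply max_le
      · calc ρ₁ x u ≤ max (ρ₁ x y) (ρ₁ y u) := by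
              have := h1ult x hx y hy u hu₁; exact this
          _ ≤ max (ρ₁ x y) (max (ρ₁ y u) (ρ₂ u z)) :=
              max_le_max le_rfl (le_max_left _ _)
      · exact le_trans (le_max_right _ _) (le_max_right _ _)
    · -- x,z ∈ Z₁, y ∈ Z₂
      rw [hρ₁ x hx z hz, (hc x hx y hy).1, (hc z hz y hy).2]
      calc ρ₁ x z ≤ max (ρ₁ x u) (ρ₁ z u) := h1u x hx z hz
        _ ≤ max (max (ρ₁ x u) (ρ₂ u y)) (max (ρ₁ z u) (ρ₂ u y)) :=
            max_le_max (le_max_left _ _) (le_max_left _ _)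
    · -- x ∈ Z₁, y,z ∈ Z₂
      rw [(hc x hx z hz).1, (hc x hx y hy).1, hρ₂ y hy z hz]
      apply max_le
      · exact le_trans (le_max_left _ _) (le_max_left _ _)
      · calc ρ₂ u z ≤ max (ρ₂ u y) (ρ₂ y z) := h2ult u hu₂ y hy z hz
          _ ≤ max (max (ρ₁ x u) (ρ₂ u y)) (ρ₂ y z) :=
              max_le_max (le_max_right _ _) le_rfl
    · -- x ∈ Z₂, y,z ∈ Z₁
      rw [(hc z hz x hx).2, (hc y hy x hx).2, hρ₁ y hy z hz]
      apply max_le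
      · have hb : ρ₁ z u ≤ max (ρ₁ y z) (ρ₁ y u) := by
          have := h1ult z hz y hy u hu₁
          rwa [h1symm z hz y hy] at this
        refine le_trans hb (max_le (le_max_right _ _) ?_)
        exact le_trans (le_max_left _ _) (le_max_left _ _)
      · exact le_trans (le_max_right _ _) (le_max_left _ _)
    · -- x,z ∈ Z₂, y ∈ Z₁
      rw [hρ₂ x hx z hz, (hc y hy x hx).2, (hc y hy z hz).1]
      calc ρ₂ x z ≤ max (ρ₂ u x) (ρ₂ u z) := h2u x hx z hz
        _ ≤ max (max (ρ₁ y u) (ρ₂ u x)) (max (ρ₁ y u) (ρ₂ u z)) :=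
            max_le_max (le_max_right _ _) (le_max_right _ _)
    · -- x,y ∈ Z₂, z ∈ Z₁
      rw [(hc z hz x hx).2, hρ₂ x hx y hy, (hc z hz y hy).2]
      apply max_le
      · exact le_trans (le_max_left _ _) (le_max_right _ _)
      · have hb : ρ₂ u x ≤ max (ρ₂ u y) (ρ₂ y x) := h2ult u hu₂ y hy x hx
        rw [h2symm y hy x hx] at hb
        refine le_trans hb (max_le ?_ (le_max_left _ _))
        exact le_trans (le_max_right _ _) (le_max_right _ _)
    · rw [hρ₂ x hx z hz, hρ₂ x hx y hy, hρ₂ y hy z hz]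
      exact h2ult x hx y hy z hz
  -- nonnegativity
  have hNN : ∀ x ∈ Z₁ ∪ Z₂, ∀ y ∈ Z₁ ∪ Z₂, 0 ≤ ρ x y := by
    rintro x (hx | hx) y (hy | hy)
    · rw [hρ₁ x hx y hy]; exact h1nn x hx y hy
    · rw [(hc x hx y hy).1]; exact le_max_of_le_left (h1nn x hx u hu₁)
    · rw [(hc y hy x hx).2]; exact le_max_of_le_left (h1nn y hy u hu₁)
    · rw [hρ₂ x hx y hy]; exact h2nn x hx y hy
  refine ⟨⟨?_, ?_, hNN, ?_, ?_, hULT, ?_⟩, ?_⟩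
  · rintro x (hx | hx)
    · rw [hρ₁ x hx x hx]; exact h1refl x hx
    · rw [hρ₂ x hx x hx]; exact h2refl x hx
  · rintro x (hx | hx) y (hy | hy)
    · rw [hρ₁ x hx y hy, hρ₁ y hy x hx]; exact h1symm x hx y hy
    · rw [(hc x hx y hy).1, (hc x hx y hy).2]
    · rw [(hc y hy x hx).2, (hc y hy x hx).1]
    · rw [hρ₂ x hx y hy, hρ₂ y hy x hx]; exact h2symm x hx y hy
  · rintro x (hx | hx) y (hy | hy) hxy
    · rw [hρ₁ x hx y hy]; exact h1ne x hx y hy hxy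
    · rw [(hc x hx y hy).1]
      intro h0
      have hx0 : ρ₁ x u = 0 :=
        le_antisymm (h0 ▸ le_max_left _ _) (h1nn x hx u hu₁)
      have hy0 : ρ₂ u y = 0 :=
        le_antisymm (h0 ▸ le_max_right _ _) (h2nn u hu₂ y hy)
      have hxu : x = u := by
        by_contra hne; exact h1ne x hx u hu₁ hne hx0
      have hyu : y = u := by
        by_contra hne; exact h2ne u hu₂ y hy (Ne.symm hne) hy0
      exact hxy (hxu.trans hyu.symm)
    · rw [(hc y hy x hx).2]
      intro h0
      have hy0 : ρ₁ y u = 0 :=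
        le_antisymm (h0 ▸ le_max_left _ _) (h1nn y hy u hu₁)
      have hx0 : ρ₂ u x = 0 :=
        le_antisymm (h0 ▸ le_max_right _ _) (h2nn u hu₂ x hx)
      have hyu : y = u := by
        by_contra hne; exact h1ne y hy u hu₁ hne hy0
      have hxu : x = u := by
        by_contra hne; exact h2ne u hu₂ x hx (Ne.symm hne) hx0
      exact hxy (hxu.trans hyu.symm)
    · rw [hρ₂ x hx y hy]; exact h2ne x hx y hy hxy
  · -- triangle from ultrametric + nonneg
    intro x hx y hy z hz
    refine le_trans (hULT x hx y hy z hz) (max_le ?_ ?_)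
    · exact le_add_of_nonneg_right (hNN y hy z hz)
    · exact le_add_of_nonneg_left (hNN x hx y hy)
  · -- powers of two
    have hmax : ∀ a b : ℝ, (a ≠ 0 → ∃ i : ℕ, a = 2 ^ i) →
        (b ≠ 0 → ∃ i : ℕ, b = 2 ^ i) → max a b ≠ 0 → ∃ i : ℕ, max a b = 2 ^ i := by
      intro a b ha hb hne
      rcases le_total a b with h | h
      · rw [max_eq_right h] at hne ⊢; exact hb hne
      · rw [max_eq_left h] at hne ⊢; exact ha hne
    rintro x (hx | hx) y (hy | hy)
    · rw [hρ₁ x hx y hy]; exact h1pow x hx y hy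
    · rw [(hc x hx y hy).1]
      exact hmax _ _ (h1pow x hx u hu₁) (h2pow u hu₂ y hy)
    · rw [(hc y hy x hx).2]
      exact hmax _ _ (h1pow y hy u hu₁) (h2pow u hu₂ x hx)
    · rw [hρ₂ x hx y hy]; exact h2pow x hx y hy
  · intro x hx y hy
    rw [(hc x hx y hy).1]
end

section
/- Let (X,d) be a finite metric space, let S ⊆ X be nonempty, and let L ≥ 1 and c_S ≥ 1. Let ν be a finitely supported probability distribution over functions f : X → S such that every f in the support of ν satisfies f(u) = u for all u ∈ S, and such that for all x,y ∈ X, E_{f∼ν}[d(f(x), f(y))] ≤ L·d(x,y). Let μ_S be a finitely supported probability distribution over functions ρ : S × S → ℝ such that every ρ in the support of μ_S is a metric on S that is expanding (ρ(u,v) ≥ d(u,v) for all u,v ∈ S), and such that for all u,v ∈ S, E_{ρ∼μ_S}[ρ(u,v)] ≤ c_S·d(u,v). Then, drawing f ∼ ν and ρ ∼ μ_S independently, for all x,y ∈ X: E_{f,ρ}[ρ(f(x), f(y))] ≤ L·c_S·d(x,y). In particular, the law of the function (x,y) ↦ ρ(f(x), f(y)) is a Lipschitz extension of μ_S with extension factor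 L, since for x,y ∈ S it equals ρ(x,y) and hence its restriction to S × S has the same law as μ_S. -/
/-- `ρ` is a metric on the subset `S`: nonnegative, symmetric, zero exactly on the
diagonal, triangle inequality. -/
def IsMetricOn {X : Type*} (S : Set X) (ρ : X → X → ℝ) : Prop :=
  (∀ x ∈ S, ρ x x = 0) ∧
  (∀ x ∈ S, ∀ y ∈ S, ρ x y = ρ y x) ∧
  (∀ x ∈ S, ∀ y ∈ S, 0 ≤ ρ x y) ∧
  (∀ x ∈ S, ∀ y ∈ S, x ≠ y → ρ x y ≠ 0) ∧
  (∀ x ∈ S, ∀ y ∈ S, ∀ z ∈ S, ρ x z ≤ ρ x y + ρ y z)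

/-- Oblivious probabilistic Lipschitz extensions of deterministic embeddings yield
Lipschitz extensions of probabilistic embeddings: composing an independent random
retraction `f : X → S` of expected stretch `L` with a probabilistic embedding of `S` of
distortion `c_S` gives expected expansion at most `L·c_S` on all pairs, and the
composition restricted to `S × S` coincides with the original embedding samplewise. -/
theorem oblivious_lipschitz_extension_of_prob_embedding
    {X : Type} [Fintype X] (d : X → X → ℝ)
    (hd : IsMetricOn (Set.univ : Set X) d)
    (S : Set X) (hS : S.Nonempty)
    (L cS : ℝ) (hL : 1 ≤ L) (hcS : 1 ≤ cS)
    (n : ℕ) (q : Fin n → ℝ) (f : Fin n → X → X)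
    (hq : ∀ i, 0 ≤ q i) (hq1 : ∑ i, q i = 1)
    (hfS : ∀ i x, f i x ∈ S)
    (hfix : ∀ i, ∀ u ∈ S, f i u = u)
    (hstretch : ∀ x y, ∑ i, q i * d (f i x) (f i y) ≤ L * d x y)
    (m : ℕ) (p : Fin m → ℝ) (ρ : Fin m → X → X → ℝ)
    (hp : ∀ j, 0 ≤ p j) (hp1 : ∑ j, p j = 1)
    (hρmet : ∀ j, IsMetricOn S (ρ j))
    (hexp : ∀ j, ∀ u ∈ S, ∀ v ∈ S, d u v ≤ ρ j u v)
    (hdist : ∀ u ∈ S, ∀ v ∈ S, ∑ j, p j * ρ j u v ≤ cS * d u v) :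
    (∀ x y, ∑ i, ∑ j, q i * p j * ρ j (f i x) (f i y) ≤ L * cS * d x y) ∧
    (∀ i j, ∀ x ∈ S, ∀ y ∈ S, ρ j (f i x) (f i y) = ρ j x y) := by
  constructor
  · intro x y
    have h1 : ∀ i : Fin n, ∑ j, q i * p j * ρ j (f i x) (f i y)
        ≤ q i * (cS * d (f i x) (f i y)) := by
      intro i
      have : ∑ j, q i * p j * ρ j (f i x) (f i y)
          = q i * ∑ j, p j * ρ j (f i x) (f i y) := by
        rw [Finset.mul_sum]; congr 1; ext j; ring
      rw [this]
      exact mul_le_mul_of_nonneg_left (hdist _ (hfS i x) _ (hfS i y)) (hq i)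
    calc ∑ i, ∑ j, q i * p j * ρ j (f i x) (f i y)
        ≤ ∑ i, q i * (cS * d (f i x) (f i y)) := Finset.sum_le_sum (fun i _ => h1 i)
      _ = cS * ∑ i, q i * d (f i x) (f i y) := by
          rw [Finset.mul_sum]; congr 1; ext i; ring
      _ ≤ cS * (L * d x y) := by
          exact mul_le_mul_of_nonneg_left (hstretch x y) (le_trans zero_le_one hcS)
      _ = L * cS * d x y := by ring
  · intro i j x hx y hy
    rw [hfix i x hx, hfix i y hy]
end

section
/- Let T be a finite set, let r : T × T → ℝ≥0 and d : T × T → ℝ≥0, and let k ≥ 0 be a real number. Suppose δ : T → [0,1] and x : T × T → [0,1] satisfy δ(i) + δ(j) + x(i,j) ≥ 1 for all i,j ∈ T and ∑_{i∈T} δ(i) ≤ k. Set K′ := {i ∈ T : δ(i) ≥ 1/3}. Then |K′| ≤ 3k and ∑_{(i,j) ∈ (T∖K′) × (T∖K′)} r(i,j)·d(i,j) ≤ 3·∑_{(i,j) ∈ T × T} x(i,j)·r(i,j)·d(i,j). -/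
open Finset

/-- LP rounding for outlier MCCT on trees: thresholding the outlier variables `δ` at
`1/3` gives an outlier set `K′` of size at most `3k` whose retained communication cost
is at most `3` times the LP objective. -/
theorem mcct_outlier_rounding {T : Type} [Fintype T] [DecidableEq T]
    (r d : T → T → ℝ) (hr : ∀ i j, 0 ≤ r i j) (hd : ∀ i j, 0 ≤ d i j)
    (k : ℝ) (hk : 0 ≤ k)
    (δ : T → ℝ) (x : T → T → ℝ)
    (hδ : ∀ i, 0 ≤ δ i ∧ δ i ≤ 1)
    (hx : ∀ i j, 0 ≤ x i j ∧ x i j ≤ 1)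
    (hcov : ∀ i j, 1 ≤ δ i + δ j + x i j)
    (hbudget : ∑ i, δ i ≤ k) :
    (((univ.filter (fun i => (1 : ℝ) / 3 ≤ δ i)).card : ℝ) ≤ 3 * k) ∧
    (∑ i ∈ (univ.filter (fun i => (1 : ℝ) / 3 ≤ δ i))ᶜ,
        ∑ j ∈ (univ.filter (fun i => (1 : ℝ) / 3 ≤ δ i))ᶜ, r i j * d i j ≤
      3 * ∑ i : T, ∑ j : T, x i j * r i j * d i j) := by
  set K := univ.filter (fun i => (1 : ℝ) / 3 ≤ δ i) with hK
  constructor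
  · have h1 : (K.card : ℝ) * (1 / 3) ≤ ∑ i ∈ K, δ i := by
      have := Finset.sum_le_sum (f := fun _ : T => (1:ℝ)/3) (g := δ) (s := K)
        (fun i hi => (Finset.mem_filter.mp hi).2)
      simpa [Finset.sum_const, nsmul_eq_mul, mul_comm] using this
    have h2 : ∑ i ∈ K, δ i ≤ ∑ i, δ i :=
      Finset.sum_le_sum_of_subset_of_nonneg (Finset.subset_univ K)
        (fun i _ _ => (hδ i).1)
    nlinarith
  · have key : ∀ i ∈ Kᶜ, ∀ j ∈ Kᶜ, r i j * d i j ≤ 3 * (x i j * r i j * d i j) := by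
      intro i hi j hj
      have hi' : δ i < 1 / 3 := by
        by_contra h
        exact (Finset.mem_compl.mp hi) (Finset.mem_filter.mpr ⟨Finset.mem_univ i, le_of_not_gt h⟩)
      have hj' : δ j < 1 / 3 := by
        by_contra h
        exact (Finset.mem_compl.mp hj) (Finset.mem_filter.mpr ⟨Finset.mem_univ j, le_of_not_gt h⟩)
      have hx3 : 1 / 3 ≤ x i j := by linarith [hcov i j]
      nlinarith [mul_nonneg (hr i j) (hd i j)]
    calc ∑ i ∈ Kᶜ, ∑ j ∈ Kᶜ, r i j * d i j
        ≤ ∑ i ∈ Kᶜ, ∑ j ∈ Kᶜ, 3 * (x i j * r i j * d i j) := by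
          apply Finset.sum_le_sum
          intro i hi
          exact Finset.sum_le_sum (fun j hj => key i hi j hj)
      _ = 3 * ∑ i ∈ Kᶜ, ∑ j ∈ Kᶜ, x i j * r i j * d i j := by
          rw [Finset.mul_sum]; congr 1; ext i; rw [Finset.mul_sum]
      _ ≤ 3 * ∑ i : T, ∑ j : T, x i j * r i j * d i j := by
          apply mul_le_mul_of_nonneg_left _ (by norm_num)
          have hnn : ∀ i j : T, 0 ≤ x i j * r i j * d i j := fun i j =>
            mul_nonneg (mul_nonneg (hx i j).1 (hr i j)) (hd i j)
          calc ∑ i ∈ Kᶜ, ∑ j ∈ Kᶜ, x i j * r i j * d i j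
              ≤ ∑ i ∈ Kᶜ, ∑ j : T, x i j * r i j * d i j := by
                apply Finset.sum_le_sum
                intro i _
                exact Finset.sum_le_sum_of_subset_of_nonneg (Finset.subset_univ _)
                  (fun j _ _ => hnn i j)
            _ ≤ ∑ i : T, ∑ j : T, x i j * r i j * d i j :=
                Finset.sum_le_sum_of_subset_of_nonneg (Finset.subset_univ _)
                  (fun i _ _ => Finset.sum_nonneg (fun j _ => hnn i j))
end
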